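/- arXiv:1612.04428 — 7 statements merged into one kernel-verified Lean document; each statement's English description precedes it below -/
import Mathlib

section
/- Let n ≥ 1, let V be an n×n matrix with nonnegative real entries, and fix parameters s > 0 and t > 0. Then the Regularized Master Equations admit exactly one solution (r, r̃) ∈ ℝ^n × ℝ^n with r_i > 0 and r̃_i > 0 for every i ∈ {1,…,n}, and this solution satisfies the trace identity ∑_{i=1}^n r_i = ∑_{i=1}^n r̃_i. -/
/-!
In logarithmic coordinates `p = log r` the master equations say that `p` is a fixed point of
`logMasterMap`. Every value of the master map is at most `t⁻¹`, so all fixed points lie in the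
box `p ≤ log t⁻¹`. For `u = exp p` in that box and `W = V` or `Vᵀ`, `(W *ᵥ u) i` is bounded by
some `C`, and convexity of `exp` shows that multiplying `u` by at most `exp d` multiplies
`(W *ᵥ u) i + t` by at most `exp (θ * d)`, where `θ = C / (C + t) < 1`; the map
`(A, B) ↦ A / (s ^ 2 + B * A)` does not increase such multiplicative errors. Hence
`logMasterMap` is a `θ`-contraction for the sup distance, and the Banach fixed point theorem
gives existence and uniqueness. The trace identity follows by summing
`r i * B i = rt i * A i` and using `r ⬝ᵥ (V *ᵥ rt) = rt ⬝ᵥ (Vᵀ *ᵥ r)`.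
-/

open Matrix BigOperators

open Real Set Function NNReal

theorem existsUnique_isFixedPt_of_lipschitzOnWith {α : Type*} [MetricSpace α] [CompleteSpace α]
    [Nonempty α] {f : α → α} {s : Set α} {K : ℝ≥0} (hs : IsClosed s) (hfs : ∀ x, f x ∈ s)
    (hK : K < 1) (hf : LipschitzOnWith K f s) : ∃! x, IsFixedPt f x := by
  have hsf : MapsTo f s s := fun x _ => hfs x
  have hc : ContractingWith K (hsf.restrict f s s) := ⟨hK, hf.mapsToRestrict hsf⟩
  obtain ⟨x⟩ := ‹Nonempty α›
  obtain ⟨y, hys, hy, -⟩ :=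
    hc.exists_fixedPoint' hs.isComplete hsf (hfs x) (edist_ne_top _ _)
  refine ⟨y, hy, fun z hz => ?_⟩
  have hzs : z ∈ s := hz ▸ hfs z
  exact congrArg Subtype.val
    (hc.fixedPoint_unique' (x := ⟨z, hzs⟩) (y := ⟨y, hys⟩) (Subtype.ext hz) (Subtype.ext hy))

theorem div_add_le_div_add {a b t : ℝ} (ht : 0 < t) (ha : 0 ≤ a) (hab : a ≤ b) :
    a / (a + t) ≤ b / (b + t) := by
  rw [div_le_div_iff₀ (by linarith) (by linarith)]
  nlinarith

theorem add_le_exp_mul_add {a b C t d : ℝ} (ha : 0 ≤ a) (haC : a ≤ C) (ht : 0 < t)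
    (hd : 0 ≤ d) (hab : a ≤ exp d * b) : a + t ≤ exp (C / (C + t) * d) * (b + t) := by
  set w := a / (a + t)
  have hat : 0 < a + t := by linarith
  have hw0 : 0 ≤ w := by positivity
  have hw1 : w ≤ 1 := (div_le_one hat).2 (by linarith)
  have hwC : w * d ≤ C / (C + t) * d :=
    mul_le_mul_of_nonneg_right (div_add_le_div_add ht ha haC) hd
  -- convexity of `exp` between `-d` and `0`, with weights `a : t`
  have hconv : exp (-(w * d)) ≤ w * exp (-d) + (1 - w) := by
    have := convexOn_exp.2 (mem_univ (-d)) (mem_univ 0) hw0 (sub_nonneg.2 hw1) (by ring)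
    simpa [smul_eq_mul] using this
  have hb : a * exp (-d) ≤ b := by
    rw [exp_neg, ← div_eq_mul_inv, div_le_iff₀ (exp_pos d)]
    linarith
  have hwa : (a + t) * w = a := mul_div_cancel₀ a hat.ne'
  calc a + t = exp (w * d) * ((a + t) * exp (-(w * d))) := by
        rw [mul_left_comm, ← exp_add, add_neg_cancel, exp_zero, mul_one]
    _ ≤ exp (w * d) * (a * exp (-d) + t) := by
        gcongr
        calc (a + t) * exp (-(w * d)) ≤ (a + t) * (w * exp (-d) + (1 - w)) := by gcongr
          _ = a * exp (-d) + t := by linear_combination (exp (-d) - 1) * hwa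
    _ ≤ exp (C / (C + t) * d) * (b + t) := by
        gcongr

theorem dist_log_le {a b c : ℝ} (ha : 0 < a) (hb : 0 < b) (hab : a ≤ exp c * b)
    (hba : b ≤ exp c * a) : dist (log a) (log b) ≤ c := by
  have key : ∀ {x y : ℝ}, 0 < x → 0 < y → x ≤ exp c * y → log x - log y ≤ c := by
    intro x y hx hy hxy
    have := log_le_log hx hxy
    rw [log_mul (exp_pos c).ne' hy.ne', log_exp] at this
    linarith
  rw [Real.dist_eq, abs_sub_le_iff]
  exact ⟨key ha hb hab, key hb ha hba⟩

theorem exp_le_exp_mul_of_dist_le {x y d : ℝ} (h : dist x y ≤ d) : exp x ≤ exp d * exp y := by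
  rw [← exp_add, exp_le_exp]
  linarith [(abs_sub_le_iff.1 (Real.dist_eq x y ▸ h)).1]

theorem dist_prod_pi_le_iff {ι β : Type*} [Fintype ι] [PseudoMetricSpace β]
    {p q : (ι → β) × (ι → β)} {c : ℝ} (hc : 0 ≤ c) :
    dist p q ≤ c ↔ ∀ i, dist (p.1 i) (q.1 i) ≤ c ∧ dist (p.2 i) (q.2 i) ≤ c := by
  rw [Prod.dist_eq, max_le_iff, dist_pi_le_iff hc, dist_pi_le_iff hc, forall_and]

theorem div_sq_add_mul_le_mul_div {s a a' b b' e : ℝ} (ha : 0 < a) (ha' : 0 < a') (hb : 0 < b)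
    (hb' : 0 < b') (haa : a' ≤ e * a) (hbb : b ≤ e * b') :
    a' / (s ^ 2 + b' * a') ≤ e * (a / (s ^ 2 + b * a)) := by
  have he : 0 ≤ e := nonneg_of_mul_nonneg_left (ha'.le.trans haa) ha
  rw [mul_div_assoc', div_le_div_iff₀ (by positivity) (by positivity)]
  nlinarith [mul_le_mul_of_nonneg_left haa (sq_nonneg s),
    mul_le_mul_of_nonneg_left hbb (mul_pos ha ha').le]

theorem div_sq_add_mul_le_inv {s a b t : ℝ} (ha : 0 < a) (ht : 0 < t) (hb : t ≤ b) :
    a / (s ^ 2 + b * a) ≤ t⁻¹ := by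
  have hb0 : 0 < b := ht.trans_le hb
  rw [div_le_iff₀ (by positivity), ← div_eq_inv_mul, le_div_iff₀ ht]
  nlinarith [sq_nonneg s, mul_le_mul_of_nonneg_right hb ha.le]

namespace Matrix

variable {ι : Type*} [Fintype ι] {W : Matrix ι ι ℝ}

theorem mulVec_apply_nonneg (hW : ∀ i j, 0 ≤ W i j) {x : ι → ℝ} (hx : ∀ j, 0 ≤ x j) (i : ι) :
    0 ≤ (W *ᵥ x) i :=
  Finset.sum_nonneg fun j _ => mul_nonneg (hW i j) (hx j)

theorem mulVec_apply_mono (hW : ∀ i j, 0 ≤ W i j) {x y : ι → ℝ} (hxy : ∀ j, x j ≤ y j)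
    (i : ι) : (W *ᵥ x) i ≤ (W *ᵥ y) i :=
  Finset.sum_le_sum fun j _ => mul_le_mul_of_nonneg_left (hxy j) (hW i j)

theorem mulVec_apply_le_sum_mul (hW : ∀ i j, 0 ≤ W i j) {x : ι → ℝ} {c : ℝ} (hxc : ∀ j, x j ≤ c)
    (i : ι) : (W *ᵥ x) i ≤ (∑ j, W i j) * c := by
  rw [Finset.sum_mul]
  exact Finset.sum_le_sum fun j _ => mul_le_mul_of_nonneg_left (hxc j) (hW i j)

theorem mulVec_exp_add_le_exp_mul_add (hW : ∀ i j, 0 ≤ W i j) {t C : ℝ} (ht : 0 < t)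
    (hC : ∀ i, (∑ j, W i j) / t ≤ C) {y z : ι → ℝ} (hy : ∀ j, y j ≤ log t⁻¹) {d : ℝ}
    (hd : 0 ≤ d) (hyz : dist y z ≤ d) (i : ι) :
    (W *ᵥ fun j => exp (y j)) i + t ≤
      exp (C / (C + t) * d) * ((W *ᵥ fun j => exp (z j)) i + t) := by
  refine add_le_exp_mul_add (mulVec_apply_nonneg hW (fun j => (exp_pos _).le) i) ?_ ht hd ?_
  · calc (W *ᵥ fun j => exp (y j)) i ≤ (∑ j, W i j) * t⁻¹ :=
          mulVec_apply_le_sum_mul hW (fun j => (le_log_iff_exp_le (inv_pos.2 ht)).1 (hy j)) i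
      _ ≤ C := hC i
  · calc (W *ᵥ fun j => exp (y j)) i ≤ (W *ᵥ (exp d • fun j => exp (z j))) i :=
          mulVec_apply_mono hW
            (fun j => exp_le_exp_mul_of_dist_le ((dist_le_pi_dist y z j).trans hyz)) i
      _ = exp d * (W *ᵥ fun j => exp (z j)) i := by rw [mulVec_smul]; rfl

theorem sum_eq_sum_of_mul_mulVec_add_eq {R : Type*} [Field R]
    {V : Matrix ι ι R} {r rt : ι → R} {t : R} (ht : t ≠ 0)
    (h : ∀ i, r i * ((V *ᵥ rt) i + t) = rt i * ((Vᵀ *ᵥ r) i + t)) :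
    ∑ i, r i = ∑ i, rt i := by
  have hsum := Finset.sum_congr rfl fun i (_ : i ∈ Finset.univ) => h i
  simp only [mul_add, Finset.sum_add_distrib, ← Finset.sum_mul] at hsum
  have hbil : ∑ i, r i * (V *ᵥ rt) i = ∑ i, rt i * (Vᵀ *ᵥ r) i := by
    change r ⬝ᵥ (V *ᵥ rt) = rt ⬝ᵥ (Vᵀ *ᵥ r)
    rw [dotProduct_mulVec, mulVec_transpose, dotProduct_comm]
  rw [hbil, add_right_inj] at hsum
  exact mul_right_cancel₀ ht hsum

end Matrix

noncomputable section MasterEquations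

variable {ι : Type*} [Fintype ι] (V : Matrix ι ι ℝ) (s t : ℝ)

def masterMap (x : (ι → ℝ) × (ι → ℝ)) : (ι → ℝ) × (ι → ℝ) :=
  (fun i => ((Vᵀ *ᵥ x.1) i + t) / (s ^ 2 + ((V *ᵥ x.2) i + t) * ((Vᵀ *ᵥ x.1) i + t)),
    fun i => ((V *ᵥ x.2) i + t) / (s ^ 2 + ((V *ᵥ x.2) i + t) * ((Vᵀ *ᵥ x.1) i + t)))

def expPair (p : (ι → ℝ) × (ι → ℝ)) : (ι → ℝ) × (ι → ℝ) :=
  (fun i => exp (p.1 i), fun i => exp (p.2 i))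

def logPair (x : (ι → ℝ) × (ι → ℝ)) : (ι → ℝ) × (ι → ℝ) :=
  (fun i => log (x.1 i), fun i => log (x.2 i))

def logMasterMap (p : (ι → ℝ) × (ι → ℝ)) : (ι → ℝ) × (ι → ℝ) :=
  logPair (masterMap V s t (expPair p))

def logBox : Set ((ι → ℝ) × (ι → ℝ)) :=
  Iic (fun _ => log t⁻¹, fun _ => log t⁻¹)

-- bounds `(V *ᵥ u) i` and `(Vᵀ *ᵥ u) i` whenever `0 ≤ u ≤ t⁻¹`
def mulVecBound : ℝ := (∑ i, ∑ j, V i j) / t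

def contractionRate : ℝ := mulVecBound V t / (mulVecBound V t + t)

variable {V s t}

omit [Fintype ι] in
theorem expPair_logPair {x : (ι → ℝ) × (ι → ℝ)} (h1 : ∀ i, 0 < x.1 i) (h2 : ∀ i, 0 < x.2 i) :
    expPair (logPair x) = x := by
  ext i
  exacts [exp_log (h1 i), exp_log (h2 i)]

theorem masterMap_eq_self_iff {r rt : ι → ℝ} :
    masterMap V s t (r, rt) = (r, rt) ↔
      (∀ i, r i = ((Vᵀ *ᵥ r) i + t) / (s ^ 2 + ((V *ᵥ rt) i + t) * ((Vᵀ *ᵥ r) i + t))) ∧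
      (∀ i, rt i = ((V *ᵥ rt) i + t) / (s ^ 2 + ((V *ᵥ rt) i + t) * ((Vᵀ *ᵥ r) i + t))) := by
  simp only [masterMap, Prod.mk.injEq, funext_iff, eq_comm]

omit [Fintype ι] in
theorem mem_logBox {p : (ι → ℝ) × (ι → ℝ)} :
    p ∈ logBox t ↔ (∀ i, p.1 i ≤ log t⁻¹) ∧ ∀ i, p.2 i ≤ log t⁻¹ :=
  Prod.mk_le_mk

theorem masterMap_mem_Ioc (hV : ∀ i j, 0 ≤ V i j) (ht : 0 < t) (p : (ι → ℝ) × (ι → ℝ))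
    (i : ι) :
    (masterMap V s t (expPair p)).1 i ∈ Ioc 0 t⁻¹ ∧
      (masterMap V s t (expPair p)).2 i ∈ Ioc 0 t⁻¹ := by
  have hA : t ≤ (Vᵀ *ᵥ fun j => exp (p.1 j)) i + t :=
    le_add_of_nonneg_left (mulVec_apply_nonneg (fun i j => hV j i) (fun j => (exp_pos _).le) i)
  have hB : t ≤ (V *ᵥ fun j => exp (p.2 j)) i + t :=
    le_add_of_nonneg_left (mulVec_apply_nonneg hV (fun j => (exp_pos _).le) i)
  have hA0 := ht.trans_le hA
  have hB0 := ht.trans_le hB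
  refine ⟨⟨by simp only [masterMap, expPair]; positivity, div_sq_add_mul_le_inv hA0 ht hB⟩,
    ⟨by simp only [masterMap, expPair]; positivity, ?_⟩⟩
  simp only [masterMap, expPair]
  rw [mul_comm]
  exact div_sq_add_mul_le_inv hB0 ht hA

theorem logMasterMap_mem_logBox (hV : ∀ i j, 0 ≤ V i j) (ht : 0 < t) (p : (ι → ℝ) × (ι → ℝ)) :
    logMasterMap V s t p ∈ logBox t := by
  refine mem_logBox.2 ⟨fun i => ?_, fun i => ?_⟩ <;>
  obtain ⟨⟨h1, h1'⟩, ⟨h2, h2'⟩⟩ := masterMap_mem_Ioc (s := s) hV ht p i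
  exacts [log_le_log h1 h1', log_le_log h2 h2']

theorem mulVecBound_nonneg (hV : ∀ i j, 0 ≤ V i j) (ht : 0 < t) : 0 ≤ mulVecBound V t :=
  div_nonneg (Finset.sum_nonneg fun i _ => Finset.sum_nonneg fun j _ => hV i j) ht.le

theorem contractionRate_nonneg (hV : ∀ i j, 0 ≤ V i j) (ht : 0 < t) : 0 ≤ contractionRate V t :=
  have := mulVecBound_nonneg hV ht
  div_nonneg this (by linarith)

theorem contractionRate_lt_one (hV : ∀ i j, 0 ≤ V i j) (ht : 0 < t) : contractionRate V t < 1 :=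
  have := mulVecBound_nonneg hV ht
  (div_lt_one (by linarith)).2 (by linarith)

theorem sum_row_div_le_mulVecBound (hV : ∀ i j, 0 ≤ V i j) (ht : 0 < t) (i : ι) :
    (∑ j, V i j) / t ≤ mulVecBound V t :=
  div_le_div_of_nonneg_right
    (Finset.single_le_sum (fun k _ => Finset.sum_nonneg fun j _ => hV k j) (Finset.mem_univ i))
    ht.le

theorem sum_col_div_le_mulVecBound (hV : ∀ i j, 0 ≤ V i j) (ht : 0 < t) (i : ι) :
    (∑ j, Vᵀ i j) / t ≤ mulVecBound V t :=
  div_le_div_of_nonneg_right (Finset.sum_le_sum fun j _ =>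
    Finset.single_le_sum (fun k _ => hV j k) (Finset.mem_univ i)) ht.le

theorem masterMap_expPair_le (hV : ∀ i j, 0 ≤ V i j) (ht : 0 < t) {p q : (ι → ℝ) × (ι → ℝ)}
    (hp : p ∈ logBox t) (hq : q ∈ logBox t) (i : ι) :
    (masterMap V s t (expPair p)).1 i ≤
        exp (contractionRate V t * dist p q) * (masterMap V s t (expPair q)).1 i ∧
      (masterMap V s t (expPair p)).2 i ≤
        exp (contractionRate V t * dist p q) * (masterMap V s t (expPair q)).2 i := by
  have hVt : ∀ i j, 0 ≤ Vᵀ i j := fun i j => hV j i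
  have hd : 0 ≤ dist p q := dist_nonneg
  obtain ⟨hpq₁, hpq₂⟩ : dist p.1 q.1 ≤ dist p q ∧ dist p.2 q.2 ≤ dist p q := max_le_iff.1 le_rfl
  obtain ⟨hqp₁, hqp₂⟩ : dist q.1 p.1 ≤ dist p q ∧ dist q.2 p.2 ≤ dist p q :=
    max_le_iff.1 (dist_comm q p).le
  have hA := mulVec_exp_add_le_exp_mul_add hVt ht (sum_col_div_le_mulVecBound hV ht)
    (mem_logBox.1 hp).1 hd hpq₁ i
  have hA' := mulVec_exp_add_le_exp_mul_add hVt ht (sum_col_div_le_mulVecBound hV ht)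
    (mem_logBox.1 hq).1 hd hqp₁ i
  have hB := mulVec_exp_add_le_exp_mul_add hV ht (sum_row_div_le_mulVecBound hV ht)
    (mem_logBox.1 hp).2 hd hpq₂ i
  have hB' := mulVec_exp_add_le_exp_mul_add hV ht (sum_row_div_le_mulVecBound hV ht)
    (mem_logBox.1 hq).2 hd hqp₂ i
  have hpos : ∀ {W : Matrix ι ι ℝ}, (∀ i j, 0 ≤ W i j) → ∀ y : ι → ℝ,
      0 < (W *ᵥ fun j => exp (y j)) i + t := fun hW y =>
    add_pos_of_nonneg_of_pos (mulVec_apply_nonneg hW (fun j => (exp_pos _).le) i) ht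
  refine ⟨div_sq_add_mul_le_mul_div (hpos hVt _) (hpos hVt _) (hpos hV _) (hpos hV _) hA hB', ?_⟩
  simp only [masterMap, expPair]
  rw [mul_comm ((V *ᵥ _) i + t), mul_comm ((V *ᵥ _) i + t)]
  exact div_sq_add_mul_le_mul_div (hpos hV _) (hpos hV _) (hpos hVt _) (hpos hVt _) hB hA'

theorem dist_logMasterMap_le (hV : ∀ i j, 0 ≤ V i j) (ht : 0 < t) {p q : (ι → ℝ) × (ι → ℝ)}
    (hp : p ∈ logBox t) (hq : q ∈ logBox t) :
    dist (logMasterMap V s t p) (logMasterMap V s t q) ≤ contractionRate V t * dist p q := by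
  rw [dist_prod_pi_le_iff (mul_nonneg (contractionRate_nonneg hV ht) dist_nonneg)]
  intro i
  obtain ⟨hpq₁, hpq₂⟩ := masterMap_expPair_le (s := s) hV ht hp hq i
  obtain ⟨hqp₁, hqp₂⟩ := masterMap_expPair_le (s := s) hV ht hq hp i
  rw [dist_comm q p] at hqp₁ hqp₂
  obtain ⟨⟨hp₁, -⟩, hp₂, -⟩ := masterMap_mem_Ioc (s := s) hV ht p i
  obtain ⟨⟨hq₁, -⟩, hq₂, -⟩ := masterMap_mem_Ioc (s := s) hV ht q i
  exact ⟨dist_log_le hp₁ hq₁ hpq₁ hqp₁, dist_log_le hp₂ hq₂ hpq₂ hqp₂⟩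

theorem existsUnique_isFixedPt_logMasterMap (hV : ∀ i j, 0 ≤ V i j) (ht : 0 < t) :
    ∃! p, IsFixedPt (logMasterMap V s t) p :=
  existsUnique_isFixedPt_of_lipschitzOnWith (K := ⟨_, contractionRate_nonneg hV ht⟩)
    isClosed_Iic (logMasterMap_mem_logBox hV ht) (contractionRate_lt_one hV ht)
    (LipschitzOnWith.of_dist_le_mul fun _ hp _ hq => dist_logMasterMap_le hV ht hp hq)

theorem existsUnique_pos_fixedPoint_masterMap (hV : ∀ i j, 0 ≤ V i j) (ht : 0 < t) :
    ∃! x : (ι → ℝ) × (ι → ℝ), (∀ i, 0 < x.1 i) ∧ (∀ i, 0 < x.2 i) ∧ masterMap V s t x = x := by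
  obtain ⟨p, hp, huniq⟩ := existsUnique_isFixedPt_logMasterMap (s := s) hV ht
  have hpos := masterMap_mem_Ioc (s := s) hV ht
  refine ⟨expPair p, ⟨fun i => exp_pos _, fun i => exp_pos _, ?_⟩, ?_⟩
  · conv_rhs => rw [← hp.eq, logMasterMap]
    exact (expPair_logPair (fun i => (hpos p i).1.1) (fun i => (hpos p i).2.1)).symm
  · rintro x ⟨h₁, h₂, hx⟩
    have hfix : IsFixedPt (logMasterMap V s t) (logPair x) := by
      rw [IsFixedPt, logMasterMap, expPair_logPair h₁ h₂, hx]
    rw [← expPair_logPair h₁ h₂, huniq _ hfix]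

end MasterEquations

theorem stmt_0_general (n : ℕ) (V : Matrix (Fin n) (Fin n) ℝ)
    (hV : ∀ i j, 0 ≤ V i j) (s t : ℝ) (ht : 0 < t) :
    ∃ r rt : Fin n → ℝ,
      ((∀ i, 0 < r i) ∧ (∀ i, 0 < rt i) ∧
        (∀ i, r i = (Vᵀ.mulVec r i + t) /
            (s ^ 2 + (V.mulVec rt i + t) * (Vᵀ.mulVec r i + t))) ∧
        (∀ i, rt i = (V.mulVec rt i + t) /
            (s ^ 2 + (V.mulVec rt i + t) * (Vᵀ.mulVec r i + t)))) ∧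
      (∑ i, r i = ∑ i, rt i) ∧
      (∀ r' rt' : Fin n → ℝ,
        ((∀ i, 0 < r' i) ∧ (∀ i, 0 < rt' i) ∧
          (∀ i, r' i = (Vᵀ.mulVec r' i + t) /
              (s ^ 2 + (V.mulVec rt' i + t) * (Vᵀ.mulVec r' i + t))) ∧
          (∀ i, rt' i = (V.mulVec rt' i + t) /
              (s ^ 2 + (V.mulVec rt' i + t) * (Vᵀ.mulVec r' i + t)))) →
        r' = r ∧ rt' = rt) := by
  obtain ⟨⟨r, rt⟩, ⟨hr, hrt, hfix⟩, huniq⟩ := existsUnique_pos_fixedPoint_masterMap (s := s) hV ht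
  obtain ⟨hr_eq, hrt_eq⟩ := masterMap_eq_self_iff.1 hfix
  refine ⟨r, rt, ⟨hr, hrt, hr_eq, hrt_eq⟩, ?_, ?_⟩
  · refine Matrix.sum_eq_sum_of_mul_mulVec_add_eq (V := V) ht.ne' fun i => ?_
    rw [hr_eq i, hrt_eq i]
    ring
  · rintro r' rt' ⟨hr', hrt', hr'_eq, hrt'_eq⟩
    exact Prod.mk.inj (huniq (r', rt') ⟨hr', hrt', masterMap_eq_self_iff.2 ⟨hr'_eq, hrt'_eq⟩⟩)

/-- The Regularized Master Equations admit exactly one positive solution,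
and this solution satisfies the trace identity. -/
theorem stmt_0 (n : ℕ) (hn : 1 ≤ n) (V : Matrix (Fin n) (Fin n) ℝ)
    (hV : ∀ i j, 0 ≤ V i j) (s t : ℝ) (hs : 0 < s) (ht : 0 < t) :
    ∃ r rt : Fin n → ℝ,
      ((∀ i, 0 < r i) ∧ (∀ i, 0 < rt i) ∧
        (∀ i, r i = (Vᵀ.mulVec r i + t) /
            (s ^ 2 + (V.mulVec rt i + t) * (Vᵀ.mulVec r i + t))) ∧
        (∀ i, rt i = (V.mulVec rt i + t) /
            (s ^ 2 + (V.mulVec rt i + t) * (Vᵀ.mulVec r i + t)))) ∧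
      (∑ i, r i = ∑ i, rt i) ∧
      (∀ r' rt' : Fin n → ℝ,
        ((∀ i, 0 < r' i) ∧ (∀ i, 0 < rt' i) ∧
          (∀ i, r' i = (Vᵀ.mulVec r' i + t) /
              (s ^ 2 + (V.mulVec rt' i + t) * (Vᵀ.mulVec r' i + t))) ∧
          (∀ i, rt' i = (V.mulVec rt' i + t) /
              (s ^ 2 + (V.mulVec rt' i + t) * (Vᵀ.mulVec r' i + t)))) →
        r' = r ∧ rt' = rt) :=
  stmt_0_general n V hV s t ht
end

section
/- Let n ≥ 1, let V be an n×n nonnegative irreducible matrix, fix s > 0, and for t > 0 let r⃗(s,t) = (r(s,t), r̃(s,t)) be the unique positive solution of the Regularized Master Equations. (1) If (q*, q̃*) ∈ ℝ^n × ℝ^n with nonnegative entries is an accumulation point of r⃗(s,t) as t ↓ 0 (i.e., there exists a sequence t_k ↓ 0 with r⃗(s, t_k) → (q*, q̃*)), then q*_i = (Vᵀq*)_i / (s² + (Vq̃*)_i·(Vᵀq*)_i) and q̃*_i = (Vq̃*)_i / (s² + (Vq̃*)_i·(Vᵀq*)_i) for every i ∈ {1,…,n}, and ∑_{i=1}^n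 q*_i = ∑_{i=1}^n q̃*_i. (2) If moreover s² < ρ(V), then (q*, q̃*) ≠ (0, 0). -/
/-!
Along `t_k ↓ 0` the Regularized Master Equations pass to the limit as long as the limiting
denominators `s² + (V q̃)ᵢ (Vᵀ q)ᵢ ≥ s²` stay away from `0`. The trace identity holds for every
`t > 0`: cross-multiplying the two equations gives `rᵢ ((V r̃)ᵢ + t) = r̃ᵢ ((Vᵀ r)ᵢ + t)`, and
summing over `i` cancels the bilinear terms `⟨r, V r̃⟩ = ⟨Vᵀ r, r̃⟩`, leaving `t ∑ rᵢ = t ∑ r̃ᵢ`.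

If the accumulation point were `0`, the denominators would tend to `s²`, so for small `t` the
positive vector `r(s, t)` satisfies `Vᵀ r ≤ c r` for any `c > s²`. Pairing an eigenvector `v` of
`V` with `r` (the Collatz–Wielandt argument applied to `|v|`) gives `ρ(V) ≤ c`, hence
`ρ(V) ≤ s²`.
-/

open Matrix BigOperators Filter

/-- The spectral radius of a real square matrix: the maximum modulus of its complex
eigenvalues (the roots of its characteristic polynomial over `ℂ`). -/
noncomputable def specRad {n : ℕ} (V : Matrix (Fin n) (Fin n) ℝ) : ℝ :=
  sSup {x : ℝ | ∃ μ : ℂ, (V.map (Complex.ofReal)).charpoly.IsRoot μ ∧ x = ‖μ‖}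

/-- `p = (r, r̃)` is a strictly positive solution of the Regularized Master Equations
for the nonnegative matrix `V` at parameters `s, t > 0`. -/
def RMEsol {n : ℕ} (V : Matrix (Fin n) (Fin n) ℝ) (s t : ℝ)
    (p : (Fin n → ℝ) × (Fin n → ℝ)) : Prop :=
  (∀ i, 0 < p.1 i) ∧ (∀ i, 0 < p.2 i) ∧
  (∀ i, p.1 i = (Vᵀ.mulVec p.1 i + t) /
      (s ^ 2 + (V.mulVec p.2 i + t) * (Vᵀ.mulVec p.1 i + t))) ∧
  (∀ i, p.2 i = (V.mulVec p.2 i + t) /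
      (s ^ 2 + (V.mulVec p.2 i + t) * (Vᵀ.mulVec p.1 i + t)))

open Topology

section NonnegMatrix

variable {ι : Type*} [Fintype ι]

theorem Matrix.exists_mulVec_eq_smul_of_isRoot_charpoly {K : Type*} [Field K] [DecidableEq ι]
    {A : Matrix ι ι K} {μ : K} (h : A.charpoly.IsRoot μ) : ∃ v ≠ 0, A *ᵥ v = μ • v := by
  rw [← Matrix.charpoly_toLin', ← Module.End.hasEigenvalue_iff_isRoot_charpoly] at h
  obtain ⟨v, hv, hv0⟩ := h.exists_hasEigenvector
  exact ⟨v, hv0, by simpa using Module.End.mem_eigenspace_iff.mp hv⟩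

theorem Matrix.norm_smul_le_mulVec_norm {V : Matrix ι ι ℝ} (hV : ∀ i j, 0 ≤ V i j)
    {μ : ℂ} {v : ι → ℂ} (hv : V.map Complex.ofReal *ᵥ v = μ • v) :
    ‖μ‖ • (fun i => ‖v i‖) ≤ V *ᵥ fun i => ‖v i‖ := by
  intro i
  calc ‖μ‖ * ‖v i‖ = ‖∑ j, (V i j : ℂ) * v j‖ := by
        rw [← norm_mul, ← smul_eq_mul, ← Pi.smul_apply, ← hv]; rfl
    _ ≤ ∑ j, ‖(V i j : ℂ) * v j‖ := norm_sum_le _ _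
    _ = ∑ j, V i j * ‖v j‖ := by
        simp only [norm_mul, Complex.norm_real, Real.norm_of_nonneg (hV i _)]

theorem le_of_smul_le_mulVec_of_transpose_mulVec_le {V : Matrix ι ι ℝ} {u r : ι → ℝ}
    {c ρ : ℝ} (hu : 0 ≤ u) (hu0 : u ≠ 0) (hr : ∀ i, 0 < r i) (hcu : c • u ≤ V *ᵥ u)
    (hrρ : Vᵀ *ᵥ r ≤ ρ • r) : c ≤ ρ := by
  have hru : 0 < r ⬝ᵥ u := by
    obtain ⟨j, hj⟩ := Function.ne_iff.mp hu0
    exact Finset.sum_pos' (fun i _ => mul_nonneg (hr i).le (hu i))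
      ⟨j, Finset.mem_univ _, mul_pos (hr j) ((hu j).lt_of_ne' hj)⟩
  refine le_of_mul_le_mul_right ?_ hru
  calc c * (r ⬝ᵥ u) = r ⬝ᵥ (c • u) := by rw [dotProduct_smul, smul_eq_mul]
    _ ≤ r ⬝ᵥ (V *ᵥ u) := dotProduct_le_dotProduct_of_nonneg_left hcu fun i => (hr i).le
    _ = (Vᵀ *ᵥ r) ⬝ᵥ u := by rw [dotProduct_mulVec, mulVec_transpose]
    _ ≤ (ρ • r) ⬝ᵥ u := dotProduct_le_dotProduct_of_nonneg_right hrρ hu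
    _ = ρ * (r ⬝ᵥ u) := by rw [smul_dotProduct, smul_eq_mul]

end NonnegMatrix

theorem specRad_le_of_transpose_mulVec_le {n : ℕ} {V : Matrix (Fin n) (Fin n) ℝ}
    (hV : ∀ i j, 0 ≤ V i j) {r : Fin n → ℝ} (hr : ∀ i, 0 < r i) {ρ : ℝ} (hρ : 0 ≤ ρ)
    (hrρ : Vᵀ *ᵥ r ≤ ρ • r) : specRad V ≤ ρ := by
  refine Real.sSup_le ?_ hρ
  rintro _ ⟨μ, hμ, rfl⟩
  obtain ⟨v, hv0, hv⟩ := exists_mulVec_eq_smul_of_isRoot_charpoly hμ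
  have hnorm0 : (fun i => ‖v i‖) ≠ 0 := by simpa [funext_iff] using hv0
  exact le_of_smul_le_mulVec_of_transpose_mulVec_le (fun i => norm_nonneg (v i)) hnorm0 hr
    (norm_smul_le_mulVec_norm hV hv) hrρ

/-- The common denominator of the Regularized Master Equations; at `t = 0` it is the
denominator `s² + (V q̃)ᵢ (Vᵀ q)ᵢ` of the Master Equations. -/
noncomputable def rmeDenom {n : ℕ} (V : Matrix (Fin n) (Fin n) ℝ) (s t : ℝ)
    (p : (Fin n → ℝ) × (Fin n → ℝ)) (i : Fin n) : ℝ :=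
  s ^ 2 + ((V *ᵥ p.2) i + t) * ((Vᵀ *ᵥ p.1) i + t)

/-- The Regularized Master Equations without the positivity requirement; this is a
closed condition, which is what passes to the limit `t ↓ 0`. -/
def IsRMEFixedPoint {n : ℕ} (V : Matrix (Fin n) (Fin n) ℝ) (s t : ℝ)
    (p : (Fin n → ℝ) × (Fin n → ℝ)) : Prop :=
  (∀ i, p.1 i = ((Vᵀ *ᵥ p.1) i + t) / rmeDenom V s t p i) ∧
  (∀ i, p.2 i = ((V *ᵥ p.2) i + t) / rmeDenom V s t p i)

section RME

variable {n : ℕ} {V : Matrix (Fin n) (Fin n) ℝ} {s t : ℝ} {p : (Fin n → ℝ) × (Fin n → ℝ)}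

theorem rmeDenom_pos (hV : ∀ i j, 0 ≤ V i j) (hs : s ≠ 0) (ht : 0 ≤ t) (hp₁ : 0 ≤ p.1)
    (hp₂ : 0 ≤ p.2) (i : Fin n) : 0 < rmeDenom V s t p i := by
  have ha : 0 ≤ (V *ᵥ p.2) i := dotProduct_nonneg_of_nonneg (hV i) hp₂
  have hb : 0 ≤ (Vᵀ *ᵥ p.1) i := dotProduct_nonneg_of_nonneg (fun j => hV j i) hp₁
  unfold rmeDenom
  positivity

theorem tendsto_rmeDenom {α : Type*} {l : Filter α} {t' : α → ℝ}
    {p' : α → (Fin n → ℝ) × (Fin n → ℝ)} (ht : Tendsto t' l (𝓝 t)) (hp : Tendsto p' l (𝓝 p))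
    (i : Fin n) :
    Tendsto (fun k => rmeDenom V s (t' k) (p' k) i) l (𝓝 (rmeDenom V s t p i)) := by
  have hcont : Continuous fun x : ℝ × (Fin n → ℝ) × (Fin n → ℝ) => rmeDenom V s x.1 x.2 i := by
    unfold rmeDenom; fun_prop
  exact ((hcont.tendsto (t, p)).comp (ht.prodMk_nhds hp) :)

theorem IsRMEFixedPoint.of_tendsto {α : Type*} {l : Filter α} [l.NeBot] {t' : α → ℝ}
    {p' : α → (Fin n → ℝ) × (Fin n → ℝ)} (h : ∀ k, IsRMEFixedPoint V s (t' k) (p' k))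
    (ht : Tendsto t' l (𝓝 t)) (hp : Tendsto p' l (𝓝 p)) (hD : ∀ i, rmeDenom V s t p i ≠ 0) :
    IsRMEFixedPoint V s t p := by
  have hfst : Tendsto (fun k => (p' k).1) l (𝓝 p.1) := hp.fst_nhds
  have hsnd : Tendsto (fun k => (p' k).2) l (𝓝 p.2) := hp.snd_nhds
  have hmulVec (A : Matrix (Fin n) (Fin n) ℝ) {x : α → Fin n → ℝ} {y : Fin n → ℝ}
      (hx : Tendsto x l (𝓝 y)) (i : Fin n) :
      Tendsto (fun k => (A *ᵥ x k) i) l (𝓝 ((A *ᵥ y) i)) := by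
    have hA : Continuous fun z : Fin n → ℝ => A *ᵥ z := continuous_const.matrix_mulVec continuous_id
    exact tendsto_pi_nhds.mp ((hA.tendsto y).comp hx) i
  refine ⟨fun i => tendsto_nhds_unique (tendsto_pi_nhds.mp hfst i) ?_,
    fun i => tendsto_nhds_unique (tendsto_pi_nhds.mp hsnd i) ?_⟩
  · have hlim := ((hmulVec Vᵀ hfst i).add ht).div (tendsto_rmeDenom ht hp i) (hD i)
    exact hlim.congr fun k => ((h k).1 i).symm
  · have hlim := ((hmulVec V hsnd i).add ht).div (tendsto_rmeDenom ht hp i) (hD i)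
    exact hlim.congr fun k => ((h k).2 i).symm

namespace RMEsol

theorem isRMEFixedPoint (h : RMEsol V s t p) : IsRMEFixedPoint V s t p := h.2.2

theorem rmeDenom_ne_zero (h : RMEsol V s t p) (i : Fin n) : rmeDenom V s t p i ≠ 0 := by
  intro h0
  have := h.isRMEFixedPoint.1 i
  rw [h0, div_zero] at this
  exact (h.1 i).ne' this

theorem fst_mul_rmeDenom (h : RMEsol V s t p) (i : Fin n) :
    p.1 i * rmeDenom V s t p i = (Vᵀ *ᵥ p.1) i + t := by
  rw [h.isRMEFixedPoint.1 i, div_mul_cancel₀ _ (h.rmeDenom_ne_zero i)]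

theorem snd_mul_rmeDenom (h : RMEsol V s t p) (i : Fin n) :
    p.2 i * rmeDenom V s t p i = (V *ᵥ p.2) i + t := by
  rw [h.isRMEFixedPoint.2 i, div_mul_cancel₀ _ (h.rmeDenom_ne_zero i)]

theorem sum_fst_eq_sum_snd (h : RMEsol V s t p) (ht : t ≠ 0) : ∑ i, p.1 i = ∑ i, p.2 i := by
  have hcross : ∀ i, p.1 i * ((V *ᵥ p.2) i + t) = p.2 i * ((Vᵀ *ᵥ p.1) i + t) := fun i =>
    mul_right_cancel₀ (h.rmeDenom_ne_zero i) (by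
      linear_combination ((V *ᵥ p.2) i + t) * h.fst_mul_rmeDenom i -
        ((Vᵀ *ᵥ p.1) i + t) * h.snd_mul_rmeDenom i)
  have hsum := Finset.sum_congr rfl fun i (_ : i ∈ Finset.univ) => hcross i
  simp only [mul_add, Finset.sum_add_distrib, ← Finset.sum_mul] at hsum
  have hbilin : p.1 ⬝ᵥ (V *ᵥ p.2) = p.2 ⬝ᵥ (Vᵀ *ᵥ p.1) := by
    rw [dotProduct_mulVec, mulVec_transpose, dotProduct_comm]
  change p.1 ⬝ᵥ (V *ᵥ p.2) + _ = p.2 ⬝ᵥ (Vᵀ *ᵥ p.1) + _ at hsum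
  rw [hbilin, add_right_inj] at hsum
  exact mul_right_cancel₀ ht hsum

theorem transpose_mulVec_fst_le (h : RMEsol V s t p) (ht : 0 ≤ t) {c : ℝ}
    (hc : ∀ i, rmeDenom V s t p i ≤ c) : Vᵀ *ᵥ p.1 ≤ c • p.1 := by
  intro i
  have := h.fst_mul_rmeDenom i
  have := mul_le_mul_of_nonneg_left (hc i) (h.1 i).le
  simp only [Pi.smul_apply, smul_eq_mul]
  linarith

theorem specRad_le (h : RMEsol V s t p) (hV : ∀ i j, 0 ≤ V i j) (ht : 0 ≤ t) {c : ℝ}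
    (hc0 : 0 ≤ c) (hc : ∀ i, rmeDenom V s t p i ≤ c) : specRad V ≤ c :=
  specRad_le_of_transpose_mulVec_le hV h.1 hc0 (h.transpose_mulVec_fst_le ht hc)

section Limit

variable {α : Type*} {l : Filter α} [l.NeBot] {t' : α → ℝ} {p' : α → (Fin n → ℝ) × (Fin n → ℝ)}

theorem sum_fst_eq_sum_snd_of_tendsto (h : ∀ k, RMEsol V s (t' k) (p' k)) (ht : ∀ k, t' k ≠ 0)
    (hp : Tendsto p' l (𝓝 p)) : ∑ i, p.1 i = ∑ i, p.2 i :=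
  (isClosed_eq (f := fun x : (Fin n → ℝ) × (Fin n → ℝ) => ∑ i, x.1 i) (g := fun x => ∑ i, x.2 i)
    (by fun_prop) (by fun_prop)).mem_of_tendsto hp
    (Eventually.of_forall fun k => (h k).sum_fst_eq_sum_snd (ht k))

theorem specRad_le_sq_of_tendsto_zero (hV : ∀ i j, 0 ≤ V i j) (h : ∀ k, RMEsol V s (t' k) (p' k))
    (ht₀ : ∀ k, 0 ≤ t' k) (ht : Tendsto t' l (𝓝 0)) (hp : Tendsto p' l (𝓝 0)) :
    specRad V ≤ s ^ 2 := by
  refine le_of_forall_gt_imp_ge_of_dense fun c hc => ?_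
  have hD : ∀ i, Tendsto (fun k => rmeDenom V s (t' k) (p' k) i) l (𝓝 (s ^ 2)) := fun i => by
    simpa [rmeDenom] using tendsto_rmeDenom (V := V) (s := s) ht hp i
  obtain ⟨k, hk⟩ := (eventually_all.mpr fun i => (hD i).eventually (ge_mem_nhds hc)).exists
  exact (h k).specRad_le hV (ht₀ k) ((sq_nonneg s).trans hc.le) hk

end Limit

end RMEsol

end RME

theorem stmt_4_general (n : ℕ) (V : Matrix (Fin n) (Fin n) ℝ)
    (hV : ∀ i j, 0 ≤ V i j)
    (s : ℝ) (hs : 0 < s)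
    (R : ℝ → (Fin n → ℝ) × (Fin n → ℝ))
    (hR : ∀ t : ℝ, 0 < t → RMEsol V s t (R t))
    (qs qts : Fin n → ℝ) (hq : ∀ i, 0 ≤ qs i) (hqt : ∀ i, 0 ≤ qts i)
    (tk : ℕ → ℝ) (htk : ∀ k, 0 < tk k) (htk0 : Tendsto tk atTop (nhds 0))
    (hconv : Tendsto (fun k => R (tk k)) atTop (nhds (qs, qts))) :
    ((∀ i, qs i = Vᵀ.mulVec qs i / (s ^ 2 + V.mulVec qts i * Vᵀ.mulVec qs i)) ∧
     (∀ i, qts i = V.mulVec qts i / (s ^ 2 + V.mulVec qts i * Vᵀ.mulVec qs i)) ∧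
     (∑ i, qs i = ∑ i, qts i)) ∧
    (s ^ 2 < specRad V → ¬(qs = 0 ∧ qts = 0)) := by
  have hsol : ∀ k, RMEsol V s (tk k) (R (tk k)) := fun k => hR (tk k) (htk k)
  obtain ⟨hfst, hsnd⟩ := IsRMEFixedPoint.of_tendsto (fun k => (hsol k).isRMEFixedPoint) htk0
    hconv fun i => (rmeDenom_pos hV hs.ne' le_rfl hq hqt i).ne'
  refine ⟨⟨fun i => by simpa only [rmeDenom, add_zero] using hfst i,
    fun i => by simpa only [rmeDenom, add_zero] using hsnd i,
    RMEsol.sum_fst_eq_sum_snd_of_tendsto hsol (fun k => (htk k).ne') hconv⟩, ?_⟩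
  rintro hlt ⟨rfl, rfl⟩
  exact (RMEsol.specRad_le_sq_of_tendsto_zero hV hsol (fun k => (htk k).le) htk0 hconv).not_gt hlt

/-- accumulation points (as `t ↓ 0`) of the solution of the Regularized
Master Equations solve the Master Equations with the trace identity; and when
`s² < ρ(V)` such an accumulation point is nontrivial. -/
theorem stmt_4 (n : ℕ) (hn : 1 ≤ n) (V : Matrix (Fin n) (Fin n) ℝ)
    (hV : ∀ i j, 0 ≤ V i j)
    (hirr : ∀ i j, ∃ k : ℕ, 1 ≤ k ∧ 0 < (V ^ k) i j)
    (s : ℝ) (hs : 0 < s)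
    (R : ℝ → (Fin n → ℝ) × (Fin n → ℝ))
    (hR : ∀ t : ℝ, 0 < t → RMEsol V s t (R t))
    (qs qts : Fin n → ℝ) (hq : ∀ i, 0 ≤ qs i) (hqt : ∀ i, 0 ≤ qts i)
    (tk : ℕ → ℝ) (htk : ∀ k, 0 < tk k) (htk0 : Tendsto tk atTop (nhds 0))
    (hconv : Tendsto (fun k => R (tk k)) atTop (nhds (qs, qts))) :
    ((∀ i, qs i = Vᵀ.mulVec qs i / (s ^ 2 + V.mulVec qts i * Vᵀ.mulVec qs i)) ∧
     (∀ i, qts i = V.mulVec qts i / (s ^ 2 + V.mulVec qts i * Vᵀ.mulVec qs i)) ∧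
     (∑ i, qs i = ∑ i, qts i)) ∧
    (s ^ 2 < specRad V → ¬(qs = 0 ∧ qts = 0)) :=
  stmt_4_general n V hV s hs R hR qs qts hq hqt tk htk htk0 hconv
end

section
/- Let n ≥ 1, let σmin > 0, and let A = (σ_{ij}) be an n×n matrix with σ_{ij} ≥ σmin for all i, j. Set V = (1/n)·A⊙A (so V_{ij} = σ_{ij}²/n), fix s > 0 and t > 0, and let (r, r̃) be the unique positive solution of the Regularized Master Equations for V. Then (1/n)·∑_{i=1}^n r_i ≤ 1/σmin. -/
/-!
Write `a = Vᵀr + t` and `b = V r̃ + t`. The equations say `r = a / (s² + ab)` and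
`r̃ = b / (s² + ab)`, hence `r_i b_i = r̃_i a_i ≤ 1`. Summing `r_i b_i = r̃_i a_i` and using
`⟪r, V r̃⟫ = ⟪Vᵀ r, r̃⟫` gives `∑ r = ∑ r̃ =: S`. Every entry of `V` is at least `σmin²/n`, so
`b_i ≥ σmin² S / n`, and then `σmin² S² / n ≤ ∑ r_i b_i ≤ n`, i.e. `σmin S ≤ n`.
-/

open Matrix

variable {ι : Type*} [Fintype ι]

def SolvesRegularizedMasterEquations (V : Matrix ι ι ℝ) (s t : ℝ) (r rt : ι → ℝ) : Prop :=
  (∀ i, r i = ((Vᵀ *ᵥ r) i + t) / (s ^ 2 + ((V *ᵥ rt) i + t) * ((Vᵀ *ᵥ r) i + t))) ∧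
    ∀ i, rt i = ((V *ᵥ rt) i + t) / (s ^ 2 + ((V *ᵥ rt) i + t) * ((Vᵀ *ᵥ r) i + t))

namespace Matrix

variable {R : Type*} [Semiring R] [PartialOrder R] [IsOrderedRing R]

lemma mulVec_nonneg {V : Matrix ι ι R} (hV : ∀ i j, 0 ≤ V i j) {x : ι → R} (hx : ∀ i, 0 ≤ x i)
    (i : ι) : 0 ≤ (V *ᵥ x) i :=
  Finset.sum_nonneg fun j _ => mul_nonneg (hV i j) (hx j)

lemma mul_sum_le_mulVec {V : Matrix ι ι R} {c : R} (hV : ∀ i j, c ≤ V i j) {x : ι → R}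
    (hx : ∀ i, 0 ≤ x i) (i : ι) : c * ∑ j, x j ≤ (V *ᵥ x) i := by
  rw [Finset.mul_sum]
  exact Finset.sum_le_sum fun j _ => mul_le_mul_of_nonneg_right (hV i j) (hx j)

end Matrix

namespace SolvesRegularizedMasterEquations

variable {V : Matrix ι ι ℝ} {s t : ℝ} {r rt : ι → ℝ}

lemma mul_eq_mul (h : SolvesRegularizedMasterEquations V s t r rt) (i : ι) :
    r i * ((V *ᵥ rt) i + t) = rt i * ((Vᵀ *ᵥ r) i + t) := by
  rw [h.1 i, h.2 i]
  ring

lemma mul_le_one (h : SolvesRegularizedMasterEquations V s t r rt) (hV : ∀ i j, 0 ≤ V i j)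
    (ht : 0 ≤ t) (hr : ∀ i, 0 ≤ r i) (hrt : ∀ i, 0 ≤ rt i) (i : ι) :
    r i * ((V *ᵥ rt) i + t) ≤ 1 := by
  have ha : 0 ≤ (Vᵀ *ᵥ r) i + t := add_nonneg (mulVec_nonneg (fun i j => hV j i) hr i) ht
  have hb : 0 ≤ (V *ᵥ rt) i + t := add_nonneg (mulVec_nonneg hV hrt i) ht
  rw [h.1 i, div_mul_eq_mul_div, mul_comm]
  exact div_le_one_of_le₀ (le_add_of_nonneg_left (sq_nonneg s)) (by positivity)

lemma sum_eq_sum (h : SolvesRegularizedMasterEquations V s t r rt) (ht : t ≠ 0) :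
    ∑ i, r i = ∑ i, rt i := by
  have hsum := Finset.sum_congr rfl fun i (_ : i ∈ Finset.univ) => h.mul_eq_mul i
  simp only [mul_add, Finset.sum_add_distrib, ← Finset.sum_mul] at hsum
  have hdot : r ⬝ᵥ (V *ᵥ rt) = rt ⬝ᵥ (Vᵀ *ᵥ r) := by
    rw [dotProduct_mulVec, mulVec_transpose, dotProduct_comm]
  simp only [dotProduct] at hdot
  exact mul_right_cancel₀ ht (by linarith)

lemma mul_sum_sq_le_card (h : SolvesRegularizedMasterEquations V s t r rt) {c : ℝ}
    (hc : 0 ≤ c) (hV : ∀ i j, c ≤ V i j) (ht : 0 < t) (hr : ∀ i, 0 ≤ r i)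
    (hrt : ∀ i, 0 ≤ rt i) : c * (∑ i, r i) ^ 2 ≤ Fintype.card ι := by
  have hV₀ : ∀ i j, 0 ≤ V i j := fun i j => hc.trans (hV i j)
  have hb : ∀ i, c * ∑ j, r j ≤ (V *ᵥ rt) i + t := fun i => by
    rw [h.sum_eq_sum ht.ne']
    linarith [mul_sum_le_mulVec hV hrt i]
  calc c * (∑ i, r i) ^ 2 = ∑ i, r i * (c * ∑ j, r j) := by rw [← Finset.sum_mul]; ring
    _ ≤ ∑ i, r i * ((V *ᵥ rt) i + t) :=
      Finset.sum_le_sum fun i _ => mul_le_mul_of_nonneg_left (hb i) (hr i)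
    _ ≤ ∑ _i : ι, (1 : ℝ) := Finset.sum_le_sum fun i _ => h.mul_le_one hV₀ ht.le hr hrt i
    _ = Fintype.card ι := by simp

end SolvesRegularizedMasterEquations

theorem stmt_5_general (n : ℕ) (σmin : ℝ) (hσmin : 0 < σmin)
    (A : Matrix (Fin n) (Fin n) ℝ) (hA : ∀ i j, σmin ≤ A i j)
    (V : Matrix (Fin n) (Fin n) ℝ) (hV : ∀ i j, V i j = A i j ^ 2 / n)
    (s t : ℝ) (ht : 0 < t)
    (r rt : Fin n → ℝ) (hr : ∀ i, 0 < r i) (hrt : ∀ i, 0 < rt i)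
    (heq1 : ∀ i, r i = (Vᵀ.mulVec r i + t) /
        (s ^ 2 + (V.mulVec rt i + t) * (Vᵀ.mulVec r i + t)))
    (heq2 : ∀ i, rt i = (V.mulVec rt i + t) /
        (s ^ 2 + (V.mulVec rt i + t) * (Vᵀ.mulVec r i + t))) :
    (1 / n : ℝ) * ∑ i, r i ≤ 1 / σmin := by
  rcases n.eq_zero_or_pos with rfl | hn
  · simp [hσmin.le]
  have hn' : (0 : ℝ) < n := by exact_mod_cast hn
  have hVlb : ∀ i j, σmin ^ 2 / n ≤ V i j := fun i j => by
    rw [hV]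
    gcongr
    exact hA i j
  have hS : 0 ≤ ∑ i, r i := Finset.sum_nonneg fun i _ => (hr i).le
  have hsq := SolvesRegularizedMasterEquations.mul_sum_sq_le_card ⟨heq1, heq2⟩ (by positivity)
    hVlb ht (fun i => (hr i).le) fun i => (hrt i).le
  rw [Fintype.card_fin, div_mul_eq_mul_div, div_le_iff₀ hn'] at hsq
  have hσS : σmin * ∑ i, r i ≤ n := by nlinarith [mul_nonneg hσmin.le hS]
  rw [div_mul_eq_mul_div, one_mul, div_le_div_iff₀ hn' hσmin]
  linarith

/-- if all entries of the standard deviation profile are bounded below by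
`σmin > 0`, then the positive solution of the Regularized Master Equations for
`V = (1/n)·A⊙A` satisfies `(1/n)·∑ rᵢ ≤ 1/σmin`. -/
theorem stmt_5 (n : ℕ) (hn : 1 ≤ n) (σmin : ℝ) (hσmin : 0 < σmin)
    (A : Matrix (Fin n) (Fin n) ℝ) (hA : ∀ i j, σmin ≤ A i j)
    (V : Matrix (Fin n) (Fin n) ℝ) (hV : ∀ i j, V i j = A i j ^ 2 / n)
    (s t : ℝ) (hs : 0 < s) (ht : 0 < t)
    (r rt : Fin n → ℝ) (hr : ∀ i, 0 < r i) (hrt : ∀ i, 0 < rt i)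
    (heq1 : ∀ i, r i = (Vᵀ.mulVec r i + t) /
        (s ^ 2 + (V.mulVec rt i + t) * (Vᵀ.mulVec r i + t)))
    (heq2 : ∀ i, rt i = (V.mulVec rt i + t) /
        (s ^ 2 + (V.mulVec rt i + t) * (Vᵀ.mulVec r i + t))) :
    (1 / n : ℝ) * ∑ i, r i ≤ 1 / σmin :=
  stmt_5_general n σmin hσmin A hA V hV s t ht r rt hr hrt heq1 heq2
end

section
/- Let n ≥ 1 and let A = (σ_{ij}) be a symmetric n×n matrix with nonnegative entries. Set V = (1/n)·A⊙A, fix s > 0 and t > 0, and let (r, r̃) be the unique positive solution of the Regularized Master Equations for V. Then (1/n)·∑_{i=1}^n r_i ≤ 1/(2s). -/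
open Matrix BigOperators

/-!
For symmetric `V` the two halves of the system coincide. Indeed, writing `cᵢ` for the common
denominator, `d = r - r̃` satisfies `cᵢ dᵢ = (V d)ᵢ`, while `r` itself satisfies
`rᵢ cᵢ = (V r)ᵢ + t`. Bounding the quadratic form `d ⬝ V d` by the Schur test with weights `r`
gives `∑ cᵢ dᵢ² ≤ ∑ cᵢ dᵢ² - t ∑ dᵢ² / rᵢ`, so `d = 0`. Once `r̃ = r`, each equation reads
`rᵢ = bᵢ / (s² + bᵢ²)`, and `2 s bᵢ ≤ s² + bᵢ²` gives `rᵢ ≤ 1 / (2s)`.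
-/

theorem two_mul_mul_le_div_mul_sq_add {p q : ℝ} (hp : 0 < p) (hq : 0 < q) (x y : ℝ) :
    2 * (x * y) ≤ q / p * x ^ 2 + p / q * y ^ 2 := by
  rw [div_mul_eq_mul_div, div_mul_eq_mul_div, div_add_div _ _ hp.ne' hq.ne',
    le_div_iff₀ (by positivity)]
  nlinarith [sq_nonneg (q * x - p * y), mul_pos hp hq]

theorem div_sq_add_sq_le_one_div_two_mul {s : ℝ} (hs : 0 < s) (b : ℝ) :
    b / (s ^ 2 + b ^ 2) ≤ 1 / (2 * s) := by
  rw [div_le_div_iff₀ (by positivity) (by positivity)]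
  nlinarith [sq_nonneg (s - b)]

namespace Matrix.IsSymm

variable {ι : Type*} [Fintype ι] {V : Matrix ι ι ℝ}

/-- Schur test with weights `w`. -/
theorem dotProduct_mulVec_le (hV : V.IsSymm) (hnn : ∀ i j, 0 ≤ V i j) {w : ι → ℝ}
    (hw : ∀ i, 0 < w i) (x : ι → ℝ) :
    x ⬝ᵥ (V *ᵥ x) ≤ ∑ i, x i ^ 2 / w i * (V *ᵥ w) i := by
  set F : ι → ι → ℝ := fun i j => V i j * (w j / w i * x i ^ 2)
  have hrow : ∀ i, ∑ j, F i j = x i ^ 2 / w i * (V *ᵥ w) i := by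
    intro i
    simp only [F, mulVec, dotProduct, Finset.mul_sum]
    exact Finset.sum_congr rfl fun j _ => by field_simp
  have hpair : 2 * (x ⬝ᵥ (V *ᵥ x)) ≤ ∑ i, ∑ j, F i j + ∑ i, ∑ j, F j i := by
    simp only [dotProduct, mulVec, Finset.mul_sum, ← Finset.sum_add_distrib]
    gcongr with i _ j _
    have := mul_le_mul_of_nonneg_left
      (two_mul_mul_le_div_mul_sq_add (hw i) (hw j) (x i) (x j)) (hnn i j)
    simp only [F, hV.apply i j]
    linarith
  rw [Finset.sum_comm (f := fun i j => F j i)] at hpair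
  simp only [hrow] at hpair
  linarith

theorem eq_zero_of_mul_eq_mulVec (hV : V.IsSymm) (hnn : ∀ i j, 0 ≤ V i j) {r c : ι → ℝ}
    {t : ℝ} (hr : ∀ i, 0 < r i) (ht : 0 < t) (hrc : ∀ i, r i * c i = (V *ᵥ r) i + t)
    {x : ι → ℝ} (hx : ∀ i, c i * x i = (V *ᵥ x) i) : x = 0 := by
  have hquad : x ⬝ᵥ (V *ᵥ x) = ∑ i, c i * x i ^ 2 := by
    simp only [dotProduct, ← hx]
    exact Finset.sum_congr rfl fun i _ => by ring
  have hterm : ∀ i, x i ^ 2 / r i * (V *ᵥ r) i = c i * x i ^ 2 - t * (x i ^ 2 / r i) := by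
    intro i
    rw [show (V *ᵥ r) i = r i * c i - t by linarith [hrc i]]
    field_simp [(hr i).ne']
  have hterm_nonneg : ∀ i ∈ Finset.univ, 0 ≤ t * (x i ^ 2 / r i) :=
    fun i _ => by have := hr i; positivity
  have hsum : ∑ i, t * (x i ^ 2 / r i) = 0 := by
    have := hV.dotProduct_mulVec_le hnn hr x
    simp only [hquad, hterm, Finset.sum_sub_distrib] at this
    exact le_antisymm (by linarith) (Finset.sum_nonneg hterm_nonneg)
  funext i
  have := (Finset.sum_eq_zero_iff_of_nonneg hterm_nonneg).mp hsum i (Finset.mem_univ i)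
  simpa [ht.ne', (hr i).ne'] using this

theorem eq_of_regularized_master_eq (hV : V.IsSymm) (hnn : ∀ i j, 0 ≤ V i j) {s t : ℝ}
    (ht : 0 < t) {r rt : ι → ℝ} (hr : ∀ i, 0 < r i)
    (heq1 : ∀ i, r i = (Vᵀ.mulVec r i + t) /
        (s ^ 2 + (V.mulVec rt i + t) * (Vᵀ.mulVec r i + t)))
    (heq2 : ∀ i, rt i = (V.mulVec rt i + t) /
        (s ^ 2 + (V.mulVec rt i + t) * (Vᵀ.mulVec r i + t))) :
    rt = r := by
  rw [hV.eq] at heq1 heq2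
  obtain ⟨c, hc_def⟩ : ∃ c : ι → ℝ, ∀ i, s ^ 2 + ((V *ᵥ rt) i + t) * ((V *ᵥ r) i + t) = c i :=
    ⟨_, fun _ => rfl⟩
  simp only [hc_def] at heq1 heq2
  -- a vanishing denominator would force `rᵢ = 0`, since `x / 0 = 0`
  have hc : ∀ i, c i ≠ 0 := fun i hci => (hr i).ne' (by rw [heq1 i, hci, div_zero])
  have hrc : ∀ i, r i * c i = (V *ᵥ r) i + t := fun i => (eq_div_iff (hc i)).mp (heq1 i)
  have hrtc : ∀ i, rt i * c i = (V *ᵥ rt) i + t := fun i => (eq_div_iff (hc i)).mp (heq2 i)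
  have hdiff : ∀ i, c i * (r - rt) i = (V *ᵥ (r - rt)) i := fun i => by
    simp only [Pi.sub_apply, mulVec_sub]
    linear_combination hrc i - hrtc i
  exact (sub_eq_zero.mp (hV.eq_zero_of_mul_eq_mulVec hnn hr ht hrc hdiff)).symm

end Matrix.IsSymm

theorem stmt_6_general (n : ℕ)
    (A : Matrix (Fin n) (Fin n) ℝ) (hAsym : Aᵀ = A)
    (V : Matrix (Fin n) (Fin n) ℝ) (hV : ∀ i j, V i j = A i j ^ 2 / n)
    (s t : ℝ) (hs : 0 < s) (ht : 0 < t)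
    (r rt : Fin n → ℝ) (hr : ∀ i, 0 < r i)
    (heq1 : ∀ i, r i = (Vᵀ.mulVec r i + t) /
        (s ^ 2 + (V.mulVec rt i + t) * (Vᵀ.mulVec r i + t)))
    (heq2 : ∀ i, rt i = (V.mulVec rt i + t) /
        (s ^ 2 + (V.mulVec rt i + t) * (Vᵀ.mulVec r i + t))) :
    (1 / n : ℝ) * ∑ i, r i ≤ 1 / (2 * s) := by
  have hVsymm : V.IsSymm := IsSymm.ext fun i j => by
    rw [hV, hV, ← transpose_apply A i j, hAsym]
  have hVnn : ∀ i j, 0 ≤ V i j := fun i j => by rw [hV]; positivity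
  have hrt : rt = r := hVsymm.eq_of_regularized_master_eq hVnn ht hr heq1 heq2
  have hbound : ∀ i ∈ Finset.univ, r i ≤ 1 / (2 * s) := fun i _ => by
    rw [heq1 i, hrt, hVsymm.eq, ← sq]
    exact div_sq_add_sq_le_one_div_two_mul hs _
  have hsum : ∑ i, r i ≤ 1 / (2 * s) * n := by
    simpa [mul_comm] using Finset.sum_le_card_nsmul _ _ _ hbound
  rw [one_div_mul_eq_div]
  exact div_le_of_le_mul₀ n.cast_nonneg (by positivity) hsum

/-- if the standard deviation profile `A` is symmetric with nonnegative
entries, then the positive solution of the Regularized Master Equations for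
`V = (1/n)·A⊙A` satisfies `(1/n)·∑ rᵢ ≤ 1/(2s)`. -/
theorem stmt_6 (n : ℕ) (hn : 1 ≤ n)
    (A : Matrix (Fin n) (Fin n) ℝ) (hA : ∀ i j, 0 ≤ A i j) (hAsym : Aᵀ = A)
    (V : Matrix (Fin n) (Fin n) ℝ) (hV : ∀ i j, V i j = A i j ^ 2 / n)
    (s t : ℝ) (hs : 0 < s) (ht : 0 < t)
    (r rt : Fin n → ℝ) (hr : ∀ i, 0 < r i) (hrt : ∀ i, 0 < rt i)
    (heq1 : ∀ i, r i = (Vᵀ.mulVec r i + t) /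
        (s ^ 2 + (V.mulVec rt i + t) * (Vᵀ.mulVec r i + t)))
    (heq2 : ∀ i, rt i = (V.mulVec rt i + t) /
        (s ^ 2 + (V.mulVec rt i + t) * (Vᵀ.mulVec r i + t))) :
    (1 / n : ℝ) * ∑ i, r i ≤ 1 / (2 * s) :=
  stmt_6_general n A hAsym V hV s t hs ht r rt hr heq1 heq2
end

section
/- Let n ≥ 1, let V be an n×n matrix with nonnegative real entries, let z ∈ ℂ, and let η ∈ ℂ with Im η > 0. Consider the Schwinger–Dyson system in unknowns p = (p_i), p̃ = (p̃_i) ∈ ℂ^n: for every i ∈ {1,…,n}, |z|² − ((Vp̃)_i + η)·((Vᵀp)_i + η) ≠ 0, p_i = ((Vᵀp)_i + η) / (|z|² − ((Vp̃)_i + η)·((Vᵀp)_i + η)) and p̃_i = ((Vp̃)_i + η) / (|z|² − ((Vp̃)_i + η)·((Vᵀp)_i + η)). This system admits exactly one solution (p, p̃) with Im p_i > 0 and Im p̃_i > 0 for every i, and this solution satisfies ∑_{i=1}^n p_i = ∑_{i=1}^n p̃_i. -/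
/-!
With `a = Vᵀp + η` and `b = Vp̃ + η`, the system reads `p_i = -1/(b_i - |z|²/a_i)` and
`p̃_i = -1/(a_i - |z|²/b_i)`: the pair `x = (p, p̃)` is a fixed point of a map `Φ` built from
the affine map `x ↦ η + Sx` with `S = [[0, V], [Vᵀ, 0]] ≥ 0`, the maps `w ↦ -c/w` (`c ≥ 0`)
and sums. None of these increases `‖u - v‖ / √(Im u · Im v)` on the upper half-plane, and
adding `η` decreases it strictly, so `Φ` strictly decreases
`D(x, y) = maxₖ ‖xₖ - yₖ‖ / √(Im xₖ · Im yₖ)`. This gives uniqueness at once, and existence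
by minimizing `D(x, Φ x)` over the compact set `Φ(K₀)`, where
`K₀ = {x | Im xₖ ≥ 0, ‖xₖ‖ ≤ 1 / Im η}` is mapped into itself by `Φ`. Summing
`p_i b_i = p̃_i a_i` over `i` gives `∑ p_i = ∑ p̃_i`.
-/

namespace SchwingerDyson

open Finset Complex Function

noncomputable section

lemma sqrt_mul_add_sqrt_mul_le {a b c d : ℝ} (ha : 0 ≤ a) (hb : 0 ≤ b) (hc : 0 ≤ c) (hd : 0 ≤ d) :
    √(a * b) + √(c * d) ≤ √((a + c) * (b + d)) := by
  simpa [Fin.sum_univ_two, Real.sqrt_mul, *, add_nonneg] using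
    Real.sum_sqrt_mul_sqrt_le univ (f := ![a, c]) (g := ![b, d])
      (by simp [Fin.forall_fin_two, *]) (by simp [Fin.forall_fin_two, *])

lemma norm_add_sub_add_lt {a b c d : ℂ} {M : ℝ} (hM : 0 ≤ M) (ha : 0 ≤ a.im) (hb : 0 ≤ b.im)
    (hc : 0 ≤ c.im) (hd : 0 ≤ d.im) (hab : ‖a - b‖ < M * √(a.im * b.im))
    (hcd : ‖c - d‖ ≤ M * √(c.im * d.im)) :
    ‖(a + c) - (b + d)‖ < M * √((a + c).im * (b + d).im) :=
  calc ‖(a + c) - (b + d)‖ = ‖(a - b) + (c - d)‖ := by ring_nf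
    _ ≤ ‖a - b‖ + ‖c - d‖ := norm_add_le _ _
    _ < M * √(a.im * b.im) + M * √(c.im * d.im) := add_lt_add_of_lt_of_le hab hcd
    _ ≤ M * √((a + c).im * (b + d).im) := by
      rw [← mul_add, add_im, add_im]
      exact mul_le_mul_of_nonneg_left (sqrt_mul_add_sqrt_mul_le ha hb hc hd) hM

lemma norm_ofReal_mul_sub_le {s : ℝ} {a b : ℂ} {M : ℝ} (hs : 0 ≤ s)
    (hab : ‖a - b‖ ≤ M * √(a.im * b.im)) :
    ‖s * a - s * b‖ ≤ M * √((s * a).im * (s * b).im) := by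
  have hsqrt : √((s * a).im * (s * b).im) = s * √(a.im * b.im) := by
    rw [im_ofReal_mul, im_ofReal_mul, mul_mul_mul_comm, ← sq, Real.sqrt_mul (sq_nonneg s),
      Real.sqrt_sq hs]
  rw [← mul_sub, norm_mul, norm_real, Real.norm_of_nonneg hs, hsqrt, mul_left_comm]
  exact mul_le_mul_of_nonneg_left hab hs

lemma norm_sum_sub_sum_le {α : Type*} (s : Finset α) {u v : α → ℂ} {M : ℝ} (hM : 0 ≤ M)
    (hu : ∀ j, 0 ≤ (u j).im) (hv : ∀ j, 0 ≤ (v j).im)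
    (huv : ∀ j, ‖u j - v j‖ ≤ M * √((u j).im * (v j).im)) :
    ‖∑ j ∈ s, u j - ∑ j ∈ s, v j‖ ≤ M * √((∑ j ∈ s, u j).im * (∑ j ∈ s, v j).im) :=
  calc ‖∑ j ∈ s, u j - ∑ j ∈ s, v j‖ = ‖∑ j ∈ s, (u j - v j)‖ := by rw [sum_sub_distrib]
    _ ≤ ∑ j ∈ s, ‖u j - v j‖ := norm_sum_le _ _
    _ ≤ ∑ j ∈ s, M * (√(u j).im * √(v j).im) := by
      gcongr with j
      rw [← Real.sqrt_mul (hu j)]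
      exact huv j
    _ ≤ M * (√(∑ j ∈ s, (u j).im) * √(∑ j ∈ s, (v j).im)) := by
      rw [← mul_sum]
      exact mul_le_mul_of_nonneg_left (Real.sum_sqrt_mul_sqrt_le s hu hv) hM
    _ = M * √((∑ j ∈ s, u j).im * (∑ j ∈ s, v j).im) := by
      rw [im_sum, im_sum, Real.sqrt_mul (sum_nonneg fun j _ => hu j)]

lemma im_neg_ofReal_div (m : ℝ) (a : ℂ) : (-(m / a)).im = m * a.im / normSq a := by
  simp [div_im]

lemma im_neg_ofReal_div_nonneg {m : ℝ} (hm : 0 ≤ m) {a : ℂ} (ha : 0 ≤ a.im) :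
    0 ≤ (-(m / a)).im := by
  rw [im_neg_ofReal_div]
  exact div_nonneg (mul_nonneg hm ha) (normSq_nonneg _)

lemma norm_neg_ofReal_div_sub {m : ℝ} (hm : 0 ≤ m) {a b : ℂ} (ha : a ≠ 0) (hb : b ≠ 0) :
    ‖-(m / a) - -(m / b)‖ = m / (‖a‖ * ‖b‖) * ‖a - b‖ := by
  have h : -(m / a) - -(m / b) = m * (a - b) / (a * b) := by field_simp; ring
  rw [h, norm_div, norm_mul, norm_mul, norm_real, Real.norm_of_nonneg hm]
  ring

lemma sqrt_im_neg_ofReal_div_mul {m : ℝ} (hm : 0 ≤ m) {a b : ℂ} (ha : a ≠ 0) (hb : b ≠ 0) :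
    √((-(m / a)).im * (-(m / b)).im) = m / (‖a‖ * ‖b‖) * √(a.im * b.im) := by
  have hab : 0 < ‖a‖ * ‖b‖ := by positivity
  rw [im_neg_ofReal_div, im_neg_ofReal_div, normSq_eq_norm_sq, normSq_eq_norm_sq,
    ← Real.sqrt_sq (div_nonneg hm hab.le), ← Real.sqrt_mul (sq_nonneg _)]
  congr 1
  field_simp

lemma norm_neg_ofReal_div_sub_le {m M : ℝ} (hm : 0 ≤ m) {a b : ℂ} (ha : a ≠ 0) (hb : b ≠ 0)
    (hab : ‖a - b‖ ≤ M * √(a.im * b.im)) :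
    ‖-(m / a) - -(m / b)‖ ≤ M * √((-(m / a)).im * (-(m / b)).im) := by
  rw [norm_neg_ofReal_div_sub hm ha hb, sqrt_im_neg_ofReal_div_mul hm ha hb, mul_left_comm]
  exact mul_le_mul_of_nonneg_left hab (by positivity)

lemma norm_neg_ofReal_div_sub_lt {m M : ℝ} (hm : 0 < m) {a b : ℂ} (ha : a ≠ 0) (hb : b ≠ 0)
    (hab : ‖a - b‖ < M * √(a.im * b.im)) :
    ‖-(m / a) - -(m / b)‖ < M * √((-(m / a)).im * (-(m / b)).im) := by
  rw [norm_neg_ofReal_div_sub hm.le ha hb, sqrt_im_neg_ofReal_div_mul hm.le ha hb, mul_left_comm]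
  exact mul_lt_mul_of_pos_left hab (by positivity)

theorem exists_isFixedPt_of_isCompact {X : Type*} [TopologicalSpace X] {K : Set X}
    (hK : IsCompact K) (hne : K.Nonempty) {f : X → X} (hf : Set.MapsTo f K K) {d : X → X → ℝ}
    (hd : ContinuousOn (fun x => d x (f x)) K)
    (hlt : ∀ x ∈ K, f x ≠ x → d (f x) (f (f x)) < d x (f x)) :
    ∃ x ∈ K, IsFixedPt f x := by
  obtain ⟨x, hxK, hmin⟩ := hK.exists_isMinOn hne hd
  exact ⟨x, hxK, by_contra fun hne => (isMinOn_iff.1 hmin _ (hf hxK)).not_gt (hlt x hxK hne)⟩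

variable {ι : Type*} [Fintype ι] (S : Matrix ι ι ℝ) (σ : ι → ι) (m : ℝ) (η : ℂ)

def affineTerm (x : ι → ℂ) (k : ι) : ℂ :=
  η + ∑ j, (S k j : ℂ) * x j

def denom (x : ι → ℂ) (k : ι) : ℂ :=
  affineTerm S η x k - m / affineTerm S η x (σ k)

def sdMap (x : ι → ℂ) (k : ι) : ℂ :=
  -(denom S σ m η x k)⁻¹

variable {S σ m η} {x y : ι → ℂ}

lemma im_affineTerm (k : ι) : (affineTerm S η x k).im = η.im + ∑ j, S k j * (x j).im := by
  simp [affineTerm, im_sum]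

lemma le_im_affineTerm (hS : ∀ k l, 0 ≤ S k l) (hx : ∀ j, 0 ≤ (x j).im) (k : ι) :
    η.im ≤ (affineTerm S η x k).im := by
  rw [im_affineTerm]
  exact le_add_of_nonneg_right (sum_nonneg fun j _ => mul_nonneg (hS k j) (hx j))

lemma le_im_denom (hS : ∀ k l, 0 ≤ S k l) (hm : 0 ≤ m) (hη : 0 < η.im)
    (hx : ∀ j, 0 ≤ (x j).im) (k : ι) : η.im ≤ (denom S σ m η x k).im := by
  have hA := le_im_affineTerm (η := η) hS hx
  rw [denom, sub_eq_add_neg, add_im]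
  exact le_add_of_le_of_nonneg (hA k) (im_neg_ofReal_div_nonneg hm (hη.le.trans (hA (σ k))))

lemma affineTerm_ne_zero (hS : ∀ k l, 0 ≤ S k l) (hη : 0 < η.im) (hx : ∀ j, 0 ≤ (x j).im)
    (k : ι) : affineTerm S η x k ≠ 0 := fun h => by
  simpa [h] using hη.trans_le (le_im_affineTerm hS hx k)

lemma denom_ne_zero (hS : ∀ k l, 0 ≤ S k l) (hm : 0 ≤ m) (hη : 0 < η.im)
    (hx : ∀ j, 0 ≤ (x j).im) (k : ι) : denom S σ m η x k ≠ 0 := fun h => by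
  simpa [h] using hη.trans_le (le_im_denom (σ := σ) hS hm hη hx k)

lemma im_sdMap_pos (hS : ∀ k l, 0 ≤ S k l) (hm : 0 ≤ m) (hη : 0 < η.im)
    (hx : ∀ j, 0 ≤ (x j).im) (k : ι) : 0 < (sdMap S σ m η x k).im := by
  rw [sdMap, neg_im, inv_im, neg_div, neg_neg]
  exact div_pos (hη.trans_le (le_im_denom hS hm hη hx k))
    (normSq_pos.2 (denom_ne_zero hS hm hη hx k))

lemma norm_sdMap_le (hS : ∀ k l, 0 ≤ S k l) (hm : 0 ≤ m) (hη : 0 < η.im)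
    (hx : ∀ j, 0 ≤ (x j).im) (k : ι) : ‖sdMap S σ m η x k‖ ≤ η.im⁻¹ := by
  rw [sdMap, norm_neg, norm_inv]
  exact inv_anti₀ hη ((le_im_denom hS hm hη hx k).trans ((le_abs_self _).trans (abs_im_le_norm _)))

lemma continuousOn_sdMap (hS : ∀ k l, 0 ≤ S k l) (hm : 0 ≤ m) (hη : 0 < η.im) :
    ContinuousOn (sdMap S σ m η) {x | ∀ j, 0 ≤ (x j).im} := by
  have hA (k : ι) : Continuous fun x : ι → ℂ => affineTerm S η x k := by
    unfold affineTerm; fun_prop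
  refine continuousOn_pi.2 fun k x hx => ContinuousAt.continuousWithinAt ?_
  refine ((ContinuousAt.sub ?_ ?_).inv₀ (denom_ne_zero hS hm hη hx k)).neg
  · exact (hA k).continuousAt
  · exact continuousAt_const.div (hA (σ k)).continuousAt (affineTerm_ne_zero hS hη hx (σ k))

lemma norm_sdMap_sub_lt (hS : ∀ k l, 0 ≤ S k l) (hm : 0 ≤ m) (hη : 0 < η.im)
    (hx : ∀ j, 0 ≤ (x j).im) (hy : ∀ j, 0 ≤ (y j).im) {M : ℝ} (hM : 0 < M)
    (hxy : ∀ j, ‖x j - y j‖ ≤ M * √((x j).im * (y j).im)) (k : ι) :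
    ‖sdMap S σ m η x k - sdMap S σ m η y k‖
      < M * √((sdMap S σ m η x k).im * (sdMap S σ m η y k).im) := by
  have hA (k : ι) : ‖affineTerm S η x k - affineTerm S η y k‖
      < M * √((affineTerm S η x k).im * (affineTerm S η y k).im) := by
    have hSx (j : ι) : 0 ≤ ((S k j : ℂ) * x j).im := by
      rw [im_ofReal_mul]; exact mul_nonneg (hS k j) (hx j)
    have hSy (j : ι) : 0 ≤ ((S k j : ℂ) * y j).im := by
      rw [im_ofReal_mul]; exact mul_nonneg (hS k j) (hy j)
    refine norm_add_sub_add_lt hM.le hη.le hη.le (im_sum .. ▸ sum_nonneg fun j _ => hSx j)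
      (im_sum .. ▸ sum_nonneg fun j _ => hSy j) ?_
      (norm_sum_sub_sum_le _ hM.le hSx hSy fun j => norm_ofReal_mul_sub_le (hS k j) (hxy j))
    -- the strict inequality comes from the `η` summand: `‖η - η‖ = 0 < M * Im η`
    simpa [← sq, Real.sqrt_sq hη.le] using mul_pos hM hη
  have hZ : ‖denom S σ m η x k - denom S σ m η y k‖
      < M * √((denom S σ m η x k).im * (denom S σ m η y k).im) := by
    rw [denom, denom, sub_eq_add_neg, sub_eq_add_neg]
    have hAx := fun k => hη.le.trans (le_im_affineTerm hS hx k)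
    have hAy := fun k => hη.le.trans (le_im_affineTerm hS hy k)
    exact norm_add_sub_add_lt hM.le (hAx k) (hAy k) (im_neg_ofReal_div_nonneg hm (hAx (σ k)))
      (im_neg_ofReal_div_nonneg hm (hAy (σ k))) (hA k)
      (norm_neg_ofReal_div_sub_le hm (affineTerm_ne_zero hS hη hx (σ k))
        (affineTerm_ne_zero hS hη hy (σ k)) (hA (σ k)).le)
  simpa only [sdMap, ofReal_one, one_div] using
    norm_neg_ofReal_div_sub_lt one_pos (denom_ne_zero hS hm hη hx k)
      (denom_ne_zero hS hm hη hy k) hZ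

section Nonempty

variable [Nonempty ι]

/-- `‖a - b‖ / √(Im a · Im b) = 2 sinh (d(a, b) / 2)` for the hyperbolic distance `d` of the upper
half-plane. -/
def normalizedDist (x y : ι → ℂ) : ℝ :=
  univ.sup' univ_nonempty fun k => ‖x k - y k‖ / √((x k).im * (y k).im)

lemma continuousOn_normalizedDist {X : Type*} [TopologicalSpace X] {f g : X → ι → ℂ} {s : Set X}
    (hf : ContinuousOn f s) (hg : ContinuousOn g s) (hf_im : ∀ a ∈ s, ∀ k, 0 < (f a k).im)
    (hg_im : ∀ a ∈ s, ∀ k, 0 < (g a k).im) :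
    ContinuousOn (fun a => normalizedDist (f a) (g a)) s := by
  refine ContinuousOn.finset_sup'_apply _ fun k _ => ContinuousOn.div ?_ ?_ fun a ha => ?_
  · exact (((continuous_apply k).comp_continuousOn hf).sub
      ((continuous_apply k).comp_continuousOn hg)).norm
  · exact ((continuous_im.comp (continuous_apply k)).comp_continuousOn hf).mul
      ((continuous_im.comp (continuous_apply k)).comp_continuousOn hg) |>.sqrt
  · exact (Real.sqrt_pos.2 (mul_pos (hf_im a ha k) (hg_im a ha k))).ne'

lemma normalizedDist_sdMap_lt (hS : ∀ k l, 0 ≤ S k l) (hm : 0 ≤ m) (hη : 0 < η.im)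
    (hx : ∀ j, 0 < (x j).im) (hy : ∀ j, 0 < (y j).im) (hxy : x ≠ y) :
    normalizedDist (sdMap S σ m η x) (sdMap S σ m η y) < normalizedDist x y := by
  have hsqrt (j : ι) : 0 < √((x j).im * (y j).im) := Real.sqrt_pos.2 (mul_pos (hx j) (hy j))
  have hle (j : ι) := le_sup' (fun k => ‖x k - y k‖ / √((x k).im * (y k).im)) (mem_univ j)
  obtain ⟨k, hk⟩ := Function.ne_iff.1 hxy
  have hM : 0 < normalizedDist x y :=
    (div_pos (norm_pos_iff.2 (sub_ne_zero.2 hk)) (hsqrt k)).trans_le (hle k)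
  refine (sup'_lt_iff _).2 fun k _ => (div_lt_iff₀ ?_).2 ?_
  · exact Real.sqrt_pos.2 (mul_pos (im_sdMap_pos hS hm hη (fun j => (hx j).le) k)
      (im_sdMap_pos hS hm hη (fun j => (hy j).le) k))
  · exact norm_sdMap_sub_lt hS hm hη (fun j => (hx j).le) (fun j => (hy j).le) hM
      (fun j => (div_le_iff₀ (hsqrt j)).1 (hle j)) k

theorem eq_of_isFixedPt_sdMap (hS : ∀ k l, 0 ≤ S k l) (hm : 0 ≤ m) (hη : 0 < η.im)
    (hx : ∀ j, 0 < (x j).im) (hy : ∀ j, 0 < (y j).im) (hxf : IsFixedPt (sdMap S σ m η) x)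
    (hyf : IsFixedPt (sdMap S σ m η) y) : x = y := by
  by_contra hxy
  have h := normalizedDist_sdMap_lt (σ := σ) hS hm hη hx hy hxy
  rw [hxf.eq, hyf.eq] at h
  exact h.false

theorem exists_isFixedPt_sdMap (hS : ∀ k l, 0 ≤ S k l) (hm : 0 ≤ m) (hη : 0 < η.im) :
    ∃ x, (∀ j, 0 < (x j).im) ∧ IsFixedPt (sdMap S σ m η) x := by
  set Φ := sdMap S σ m η
  set K₀ : Set (ι → ℂ) := Set.univ.pi fun _ => {w | 0 ≤ w.im} ∩ Metric.closedBall 0 η.im⁻¹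
  have hK₀ : IsCompact K₀ :=
    isCompact_univ_pi fun _ =>
      (isCompact_closedBall 0 _).inter_left (isClosed_le continuous_const continuous_im)
  have hK₀_im : ∀ x ∈ K₀, ∀ j, 0 ≤ (x j).im := fun x hx j => (hx j (Set.mem_univ j)).1
  have hΦ_cont : ContinuousOn Φ K₀ :=
    (continuousOn_sdMap hS hm hη).mono hK₀_im
  have hΦ_im : ∀ x ∈ K₀, ∀ j, 0 < (Φ x j).im := fun x hx => im_sdMap_pos hS hm hη (hK₀_im x hx)
  have hΦ_maps : Set.MapsTo Φ K₀ K₀ := fun x hx j _ =>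
    ⟨(hΦ_im x hx j).le, mem_closedBall_zero_iff.2 (norm_sdMap_le hS hm hη (hK₀_im x hx) j)⟩
  set K := Φ '' K₀
  have hK : IsCompact K := hK₀.image_of_continuousOn hΦ_cont
  have hK_sub : K ⊆ K₀ := hΦ_maps.image_subset
  have hK_im : ∀ x ∈ K, ∀ j, 0 < (x j).im := by
    rintro _ ⟨x, hx, rfl⟩; exact hΦ_im x hx
  have hK_maps : Set.MapsTo Φ K K := fun x hx => Set.mem_image_of_mem Φ (hK_sub hx)
  have hd : ContinuousOn (fun x => normalizedDist x (Φ x)) K :=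
    continuousOn_normalizedDist continuousOn_id (hΦ_cont.mono hK_sub) hK_im
      fun x hx => hΦ_im x (hK_sub hx)
  obtain ⟨x, hxK, hx⟩ := exists_isFixedPt_of_isCompact hK ⟨Φ 0, 0, fun j _ => by simp [hη.le], rfl⟩
    hK_maps hd fun x hxK hne =>
      normalizedDist_sdMap_lt hS hm hη (hK_im x hxK) (hK_im _ (hK_maps hxK)) hne.symm
  exact ⟨x, hK_im x hxK, hx⟩

end Nonempty

lemma neg_inv_sub_div {K : Type*} [Field K] {a b c : K} (ha : a ≠ 0) :
    -(b - c / a)⁻¹ = a / (c - b * a) := by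
  rw [show b - c / a = (b * a - c) / a by field_simp, inv_div, ← div_neg, neg_sub]

section System

open Matrix

variable {n : ℕ} (V : Matrix (Fin n) (Fin n) ℝ) (z η : ℂ)

def IsSolution (p pt : Fin n → ℂ) : Prop :=
  (∀ i, 0 < (p i).im) ∧ (∀ i, 0 < (pt i).im) ∧
    (∀ i, ((‖z‖ : ℝ) : ℂ) ^ 2 -
        ((∑ j, (V i j : ℂ) * pt j) + η) * ((∑ j, (V j i : ℂ) * p j) + η) ≠ 0) ∧
    (∀ i, p i = ((∑ j, (V j i : ℂ) * p j) + η) /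
        (((‖z‖ : ℝ) : ℂ) ^ 2 -
          ((∑ j, (V i j : ℂ) * pt j) + η) * ((∑ j, (V j i : ℂ) * p j) + η))) ∧
    (∀ i, pt i = ((∑ j, (V i j : ℂ) * pt j) + η) /
        (((‖z‖ : ℝ) : ℂ) ^ 2 -
          ((∑ j, (V i j : ℂ) * pt j) + η) * ((∑ j, (V j i : ℂ) * p j) + η)))

variable {V z η} {p pt : Fin n → ℂ}

lemma fromBlocks_nonneg (hV : ∀ i j, 0 ≤ V i j) : ∀ k l, 0 ≤ fromBlocks 0 V Vᵀ 0 k l := by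
  rintro (i | i) (j | j) <;> simp [hV]

lemma affineTerm_fromBlocks_inl (i : Fin n) :
    affineTerm (fromBlocks 0 V Vᵀ 0) η (Sum.elim p pt) (Sum.inl i)
      = (∑ j, (V i j : ℂ) * pt j) + η := by
  simp [affineTerm, Fintype.sum_sum_type, add_comm]

lemma affineTerm_fromBlocks_inr (i : Fin n) :
    affineTerm (fromBlocks 0 V Vᵀ 0) η (Sum.elim p pt) (Sum.inr i)
      = (∑ j, (V j i : ℂ) * p j) + η := by
  simp [affineTerm, Fintype.sum_sum_type, add_comm]

lemma sdMap_fromBlocks_inl (hV : ∀ i j, 0 ≤ V i j) (hη : 0 < η.im)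
    (h : ∀ k, 0 ≤ (Sum.elim p pt k).im) (i : Fin n) :
    sdMap (fromBlocks 0 V Vᵀ 0) Sum.swap (‖z‖ ^ 2) η (Sum.elim p pt) (Sum.inl i)
      = ((∑ j, (V j i : ℂ) * p j) + η) / (((‖z‖ : ℝ) : ℂ) ^ 2 -
          ((∑ j, (V i j : ℂ) * pt j) + η) * ((∑ j, (V j i : ℂ) * p j) + η)) := by
  have ha := affineTerm_ne_zero (fromBlocks_nonneg hV) hη h (Sum.inr i)
  rw [affineTerm_fromBlocks_inr] at ha
  rw [sdMap, denom, Sum.swap_inl, affineTerm_fromBlocks_inl, affineTerm_fromBlocks_inr, ofReal_pow,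
    neg_inv_sub_div ha]

lemma sdMap_fromBlocks_inr (hV : ∀ i j, 0 ≤ V i j) (hη : 0 < η.im)
    (h : ∀ k, 0 ≤ (Sum.elim p pt k).im) (i : Fin n) :
    sdMap (fromBlocks 0 V Vᵀ 0) Sum.swap (‖z‖ ^ 2) η (Sum.elim p pt) (Sum.inr i)
      = ((∑ j, (V i j : ℂ) * pt j) + η) / (((‖z‖ : ℝ) : ℂ) ^ 2 -
          ((∑ j, (V i j : ℂ) * pt j) + η) * ((∑ j, (V j i : ℂ) * p j) + η)) := by
  have hb := affineTerm_ne_zero (fromBlocks_nonneg hV) hη h (Sum.inl i)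
  rw [affineTerm_fromBlocks_inl] at hb
  rw [sdMap, denom, Sum.swap_inr, affineTerm_fromBlocks_inl, affineTerm_fromBlocks_inr, ofReal_pow,
    neg_inv_sub_div hb, mul_comm]

lemma isSolution_iff (hV : ∀ i j, 0 ≤ V i j) (hη : 0 < η.im) :
    IsSolution V z η p pt ↔ (∀ k, 0 < (Sum.elim p pt k).im) ∧
      IsFixedPt (sdMap (fromBlocks 0 V Vᵀ 0) Sum.swap (‖z‖ ^ 2) η) (Sum.elim p pt) := by
  constructor
  · rintro ⟨hp, hpt, -, hp_eq, hpt_eq⟩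
    have him : ∀ k, 0 < (Sum.elim p pt k).im := Sum.forall.2 ⟨hp, hpt⟩
    refine ⟨him, funext (Sum.forall.2 ⟨fun i => ?_, fun i => ?_⟩)⟩
    · rw [sdMap_fromBlocks_inl hV hη (fun k => (him k).le), Sum.elim_inl, ← hp_eq]
    · rw [sdMap_fromBlocks_inr hV hη (fun k => (him k).le), Sum.elim_inr, ← hpt_eq]
  · rintro ⟨him, hfix⟩
    have hp_eq (i : Fin n) := (congrFun hfix (Sum.inl i)).symm
    have hpt_eq (i : Fin n) := (congrFun hfix (Sum.inr i)).symm
    simp only [sdMap_fromBlocks_inl hV hη (fun k => (him k).le),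
      sdMap_fromBlocks_inr hV hη (fun k => (him k).le), Sum.elim_inl, Sum.elim_inr] at hp_eq hpt_eq
    refine ⟨fun i => him (Sum.inl i), fun i => him (Sum.inr i), fun i hd => ?_, hp_eq, hpt_eq⟩
    simpa [hp_eq i, hd] using him (Sum.inl i)

lemma IsSolution.sum_eq (hη : 0 < η.im) (h : IsSolution V z η p pt) : ∑ i, p i = ∑ i, pt i := by
  obtain ⟨-, -, -, hp, hpt⟩ := h
  have hcross (i : Fin n) : p i * ((∑ j, (V i j : ℂ) * pt j) + η)
      = pt i * ((∑ j, (V j i : ℂ) * p j) + η) := by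
    rw [hp i, hpt i]; ring
  have hdouble : ∑ i, p i * ∑ j, (V i j : ℂ) * pt j = ∑ i, pt i * ∑ j, (V j i : ℂ) * p j := by
    simp only [mul_sum]
    rw [sum_comm]
    exact sum_congr rfl fun i _ => sum_congr rfl fun j _ => by ring
  have hsum := sum_congr rfl fun i (_ : i ∈ univ) => hcross i
  simp only [mul_add, sum_add_distrib, hdouble, ← sum_mul] at hsum
  exact mul_right_cancel₀ (fun h => by simp [h] at hη) (add_left_cancel hsum)

end System

end

end SchwingerDyson

open Matrix BigOperators

/-- the Schwinger–Dyson system admits exactly one solution with all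
components having strictly positive imaginary part, and this solution satisfies
`∑ pᵢ = ∑ p̃ᵢ`. -/
theorem stmt_10 (n : ℕ) (hn : 1 ≤ n) (V : Matrix (Fin n) (Fin n) ℝ)
    (hV : ∀ i j, 0 ≤ V i j) (z η : ℂ) (hη : 0 < η.im) :
    ∃ p pt : Fin n → ℂ,
      ((∀ i, 0 < (p i).im) ∧ (∀ i, 0 < (pt i).im) ∧
        (∀ i, ((‖z‖ : ℝ) : ℂ) ^ 2 -
            ((∑ j, (V i j : ℂ) * pt j) + η) * ((∑ j, (V j i : ℂ) * p j) + η) ≠ 0) ∧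
        (∀ i, p i = ((∑ j, (V j i : ℂ) * p j) + η) /
            (((‖z‖ : ℝ) : ℂ) ^ 2 -
              ((∑ j, (V i j : ℂ) * pt j) + η) * ((∑ j, (V j i : ℂ) * p j) + η))) ∧
        (∀ i, pt i = ((∑ j, (V i j : ℂ) * pt j) + η) /
            (((‖z‖ : ℝ) : ℂ) ^ 2 -
              ((∑ j, (V i j : ℂ) * pt j) + η) * ((∑ j, (V j i : ℂ) * p j) + η)))) ∧
      (∑ i, p i = ∑ i, pt i) ∧
      (∀ p' pt' : Fin n → ℂ,
        ((∀ i, 0 < (p' i).im) ∧ (∀ i, 0 < (pt' i).im) ∧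
          (∀ i, ((‖z‖ : ℝ) : ℂ) ^ 2 -
              ((∑ j, (V i j : ℂ) * pt' j) + η) * ((∑ j, (V j i : ℂ) * p' j) + η) ≠ 0) ∧
          (∀ i, p' i = ((∑ j, (V j i : ℂ) * p' j) + η) /
              (((‖z‖ : ℝ) : ℂ) ^ 2 -
                ((∑ j, (V i j : ℂ) * pt' j) + η) * ((∑ j, (V j i : ℂ) * p' j) + η))) ∧
          (∀ i, pt' i = ((∑ j, (V i j : ℂ) * pt' j) + η) /
              (((‖z‖ : ℝ) : ℂ) ^ 2 -
                ((∑ j, (V i j : ℂ) * pt' j) + η) * ((∑ j, (V j i : ℂ) * p' j) + η)))) →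
        p' = p ∧ pt' = pt) := by
  open SchwingerDyson in
  have : Nonempty (Fin n) := ⟨⟨0, hn⟩⟩
  have hS := fromBlocks_nonneg hV
  have hm : 0 ≤ ‖z‖ ^ 2 := sq_nonneg _
  obtain ⟨x, hx, hfix⟩ := exists_isFixedPt_sdMap (σ := Sum.swap) hS hm hη
  have hsol : IsSolution V z η (x ∘ Sum.inl) (x ∘ Sum.inr) :=
    (isSolution_iff hV hη).2 (by rw [Sum.elim_comp_inl_inr]; exact ⟨hx, hfix⟩)
  refine ⟨_, _, hsol, hsol.sum_eq hη, fun p' pt' h' => ?_⟩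
  obtain ⟨hx', hfix'⟩ := (isSolution_iff hV hη).1 h'
  obtain rfl := eq_of_isFixedPt_sdMap hS hm hη hx' hx hfix' hfix
  exact ⟨rfl, rfl⟩
end

section
/- Let d, d̃ : [0,1] → (0, ∞) be continuous functions and set ρ_∞ = ∫₀¹ d(x)·d̃(x) dx. Then: (1) for every s ∈ (0, √ρ_∞) there exists a unique u_∞(s) > 0 satisfying ∫₀¹ d(x)·d̃(x) / (s² + d(x)·d̃(x)·u_∞(s)) dx = 1; (2) setting u_∞(s) = 0 for s ≥ √ρ_∞, the function u_∞ is continuous on (0, ∞); (3) the limit lim_{s↓0} u_∞(s) exists and equals 1. -/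
/-!
For `f = d d̃` and `s ≠ 0` the map `u ↦ ∫₀¹ f / (s² + f u)` is continuous and strictly decreasing on
`[0, ∞)`, equals `ρ / s²` at `u = 0` and is at most `1 / u`; so it crosses the level `1`
exactly once, at some `u > 0`, iff `s² < ρ`. Writing `u_∞(s)` for that crossing (or `0`),
strict monotonicity turns the comparison of `u_∞(s)` with a level `v > 0` into the comparison
of `∫₀¹ f / (s² + f v)` with `1`. Since the latter depends continuously on `s`, also at
`s = 0` where it equals `1 / v`, both the continuity of `u_∞` and `u_∞(s) → 1` follow.
-/

open Filter Set Topology MeasureTheory intervalIntegral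

noncomputable section

def masterIntegral (f : ℝ → ℝ) (s u : ℝ) : ℝ :=
  ∫ x in (0 : ℝ)..1, f x / (s ^ 2 + f x * u)

open Classical in
/-- The root is unique by `strictAntiOn_masterIntegral`, so this is `u_∞(s)` of the paper. -/
def masterSolution (f : ℝ → ℝ) (s : ℝ) : ℝ :=
  if h : ∃ u, 0 < u ∧ masterIntegral f s u = 1 then h.choose else 0

end

section MasterEquation

variable {f : ℝ → ℝ} {s u v : ℝ}

lemma uIoc_zero_one_subset_Icc : uIoc (0 : ℝ) 1 ⊆ Icc 0 1 :=
  uIoc_subset_uIcc.trans (uIcc_of_le zero_le_one).subset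

lemma continuousOn_masterIntegrand (hf : ContinuousOn f (Icc 0 1))
    (h : ∀ x ∈ Icc (0 : ℝ) 1, 0 < s ^ 2 + f x * u) :
    ContinuousOn (fun x => f x / (s ^ 2 + f x * u)) (Icc 0 1) :=
  hf.div (continuousOn_const.add (hf.mul continuousOn_const)) fun x hx => (h x hx).ne'

lemma intervalIntegrable_masterIntegrand (hf : ContinuousOn f (Icc 0 1))
    (h : ∀ x ∈ Icc (0 : ℝ) 1, 0 < s ^ 2 + f x * u) :
    IntervalIntegrable (fun x => f x / (s ^ 2 + f x * u)) volume 0 1 :=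
  (continuousOn_masterIntegrand hf h).intervalIntegrable_of_Icc zero_le_one

lemma masterIntegrand_le_inv {a : ℝ} (ha : 0 < a) (hu : 0 < u) :
    a / (s ^ 2 + a * u) ≤ u⁻¹ :=
  calc a / (s ^ 2 + a * u) ≤ a / (a * u) :=
        div_le_div_of_nonneg_left ha.le (by positivity) (le_add_of_nonneg_left (sq_nonneg s))
    _ = u⁻¹ := by field_simp

lemma masterIntegral_zero_right (f : ℝ → ℝ) (s : ℝ) :
    masterIntegral f s 0 = (∫ x in (0 : ℝ)..1, f x) / s ^ 2 := by
  simp [masterIntegral, intervalIntegral.integral_div]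

lemma masterIntegral_zero_left (hfpos : ∀ x ∈ Icc (0 : ℝ) 1, 0 < f x) (v : ℝ) :
    masterIntegral f 0 v = v⁻¹ := by
  rw [masterIntegral, integral_congr (g := fun _ => v⁻¹)]
  · simp
  · intro x hx
    dsimp only
    rw [zero_pow two_ne_zero, zero_add,
      div_mul_cancel_left₀ (hfpos x (uIcc_of_le (zero_le_one' ℝ) ▸ hx)).ne']

lemma masterIntegral_le_inv (hf : ContinuousOn f (Icc 0 1))
    (hfpos : ∀ x ∈ Icc (0 : ℝ) 1, 0 < f x) (hu : 0 < u) :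
    masterIntegral f s u ≤ u⁻¹ := by
  have hden : ∀ x ∈ Icc (0 : ℝ) 1, 0 < s ^ 2 + f x * u := fun x hx => by
    have := hfpos x hx; positivity
  calc masterIntegral f s u ≤ ∫ _ in (0 : ℝ)..1, u⁻¹ :=
        integral_mono_on zero_le_one (intervalIntegrable_masterIntegrand hf hden)
          intervalIntegrable_const fun x hx => masterIntegrand_le_inv (hfpos x hx) hu
    _ = u⁻¹ := by simp

lemma strictAntiOn_masterIntegral (hf : ContinuousOn f (Icc 0 1))
    (hfpos : ∀ x ∈ Icc (0 : ℝ) 1, 0 < f x) (hs : s ≠ 0) :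
    StrictAntiOn (masterIntegral f s) (Ici 0) := by
  intro u (hu : 0 ≤ u) v (hv : 0 ≤ v) huv
  have hden : ∀ w, 0 ≤ w → ∀ x ∈ Icc (0 : ℝ) 1, 0 < s ^ 2 + f x * w := fun w hw x hx => by
    have := hfpos x hx; positivity
  have hlt : ∀ x ∈ Icc (0 : ℝ) 1, f x / (s ^ 2 + f x * v) < f x / (s ^ 2 + f x * u) :=
    fun x hx => div_lt_div_of_pos_left (hfpos x hx) (hden u hu x hx) (by
      have := hfpos x hx; gcongr)
  have h0 : (0 : ℝ) ∈ Icc 0 1 := left_mem_Icc.2 zero_le_one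
  exact integral_lt_integral_of_continuousOn_of_le_of_exists_lt one_pos
    (continuousOn_masterIntegrand hf (hden v hv)) (continuousOn_masterIntegrand hf (hden u hu))
    (fun x hx => (hlt x (Ioc_subset_Icc_self hx)).le) ⟨0, h0, hlt 0 h0⟩

lemma continuousOn_masterIntegral_right (hf : ContinuousOn f (Icc 0 1))
    (hfpos : ∀ x ∈ Icc (0 : ℝ) 1, 0 < f x) (hs : s ≠ 0) :
    ContinuousOn (masterIntegral f s) (Ici 0) := by
  have hden : ∀ u : Ici (0 : ℝ), ∀ x ∈ Icc (0 : ℝ) 1, 0 < s ^ 2 + f x * u := fun u x hx => by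
    have := hfpos x hx; have : (0 : ℝ) ≤ u := u.2; positivity
  rw [continuousOn_iff_continuous_domRestrict]
  refine continuous_of_dominated_interval (bound := fun x => f x / s ^ 2)
    (fun u => (intervalIntegrable_masterIntegrand hf (hden u)).def'.aestronglyMeasurable)
    (fun u => ae_of_all _ fun x hx => ?_) ((hf.div_const _).intervalIntegrable_of_Icc zero_le_one)
    (ae_of_all _ fun x hx => ?_)
  · have hx' := uIoc_zero_one_subset_Icc hx
    rw [Real.norm_of_nonneg (div_pos (hfpos x hx') (hden u x hx')).le]
    have := hfpos x hx'
    exact div_le_div_of_nonneg_left this.le (by positivity)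
      (le_add_of_nonneg_right (mul_nonneg this.le u.2))
  · have hx' := uIoc_zero_one_subset_Icc hx
    exact continuous_const.div (continuous_const.add (continuous_const.mul continuous_subtype_val))
      fun u => (hden u x hx').ne'

lemma continuous_masterIntegral_left (hf : ContinuousOn f (Icc 0 1))
    (hfpos : ∀ x ∈ Icc (0 : ℝ) 1, 0 < f x) (hv : 0 < v) :
    Continuous (masterIntegral f · v) := by
  have hden : ∀ s, ∀ x ∈ Icc (0 : ℝ) 1, 0 < s ^ 2 + f x * v := fun s x hx => by
    have := hfpos x hx; positivity
  refine continuous_of_dominated_interval (bound := fun _ => v⁻¹)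
    (fun s => (intervalIntegrable_masterIntegrand hf (hden s)).def'.aestronglyMeasurable)
    (fun s => ae_of_all _ fun x hx => ?_) intervalIntegrable_const (ae_of_all _ fun x hx => ?_)
  · have hx' := uIoc_zero_one_subset_Icc hx
    rw [Real.norm_of_nonneg (div_pos (hfpos x hx') (hden s x hx')).le]
    exact masterIntegrand_le_inv (hfpos x hx') hv
  · have hx' := uIoc_zero_one_subset_Icc hx
    exact continuous_const.div ((continuous_pow 2).add continuous_const)
      fun s => (hden s x hx').ne'

lemma exists_masterIntegral_eq_one (hf : ContinuousOn f (Icc 0 1))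
    (hfpos : ∀ x ∈ Icc (0 : ℝ) 1, 0 < f x) (hs : s ≠ 0) (h : s ^ 2 < ∫ x in (0 : ℝ)..1, f x) :
    ∃ u, 0 < u ∧ masterIntegral f s u = 1 := by
  have h0 : 1 < masterIntegral f s 0 := by
    rwa [masterIntegral_zero_right, one_lt_div (by positivity)]
  have h1 : masterIntegral f s 1 ≤ 1 := by
    simpa using masterIntegral_le_inv hf hfpos (s := s) one_pos
  obtain ⟨u, hu, hroot⟩ := intermediate_value_Icc' zero_le_one
    ((continuousOn_masterIntegral_right hf hfpos hs).mono Icc_subset_Ici_self) ⟨h1, h0.le⟩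
  refine ⟨u, hu.1.lt_of_ne ?_, hroot⟩
  rintro rfl
  exact h0.ne' hroot

lemma existsUnique_masterIntegral_eq_one (hf : ContinuousOn f (Icc 0 1))
    (hfpos : ∀ x ∈ Icc (0 : ℝ) 1, 0 < f x) (hs : s ≠ 0) (h : s ^ 2 < ∫ x in (0 : ℝ)..1, f x) :
    ∃! u, 0 < u ∧ masterIntegral f s u = 1 := by
  obtain ⟨u, hu, hroot⟩ := exists_masterIntegral_eq_one hf hfpos hs h
  exact ⟨u, ⟨hu, hroot⟩, fun v ⟨hv, hvroot⟩ =>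
    (strictAntiOn_masterIntegral hf hfpos hs).injOn hv.le hu.le (hvroot.trans hroot.symm)⟩

lemma masterSolution_nonneg (f : ℝ → ℝ) (s : ℝ) : 0 ≤ masterSolution f s := by
  unfold masterSolution
  split_ifs with h
  exacts [h.choose_spec.1.le, le_rfl]

lemma masterSolution_spec (hf : ContinuousOn f (Icc 0 1))
    (hfpos : ∀ x ∈ Icc (0 : ℝ) 1, 0 < f x) (hs : s ≠ 0) (h : s ^ 2 < ∫ x in (0 : ℝ)..1, f x) :
    0 < masterSolution f s ∧ masterIntegral f s (masterSolution f s) = 1 := by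
  have hex := exists_masterIntegral_eq_one hf hfpos hs h
  rw [masterSolution, dif_pos hex]
  exact hex.choose_spec

lemma masterIntegral_lt_one_of_not_exists (hf : ContinuousOn f (Icc 0 1))
    (hfpos : ∀ x ∈ Icc (0 : ℝ) 1, 0 < f x) (hs : s ≠ 0)
    (h : ¬∃ u, 0 < u ∧ masterIntegral f s u = 1) (hv : 0 < v) :
    masterIntegral f s v < 1 := by
  refine (strictAntiOn_masterIntegral hf hfpos hs self_mem_Ici hv.le hv).trans_le ?_
  by_contra! h0
  rw [masterIntegral_zero_right, one_lt_div (by positivity)] at h0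
  exact h (exists_masterIntegral_eq_one hf hfpos hs h0)

lemma masterSolution_eq_zero (hf : ContinuousOn f (Icc 0 1))
    (hfpos : ∀ x ∈ Icc (0 : ℝ) 1, 0 < f x) (hs : s ≠ 0) (h : ∫ x in (0 : ℝ)..1, f x ≤ s ^ 2) :
    masterSolution f s = 0 := by
  refine dif_neg fun ⟨u, hu, hroot⟩ => hroot.not_lt ?_
  calc masterIntegral f s u < masterIntegral f s 0 :=
        strictAntiOn_masterIntegral hf hfpos hs self_mem_Ici hu.le hu
    _ ≤ 1 := by rwa [masterIntegral_zero_right, div_le_one (by positivity)]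

lemma masterIntegral_lt_one_iff (hf : ContinuousOn f (Icc 0 1))
    (hfpos : ∀ x ∈ Icc (0 : ℝ) 1, 0 < f x) (hs : s ≠ 0) (hv : 0 < v) :
    masterIntegral f s v < 1 ↔ masterSolution f s < v := by
  by_cases h : ∃ u, 0 < u ∧ masterIntegral f s u = 1
  · obtain ⟨hu, hroot⟩ := h.choose_spec
    rw [masterSolution, dif_pos h]
    conv_lhs => rw [← hroot]
    exact (strictAntiOn_masterIntegral hf hfpos hs).lt_iff_gt hv.le hu.le
  · rw [masterSolution, dif_neg h]
    exact iff_of_true (masterIntegral_lt_one_of_not_exists hf hfpos hs h hv) hv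

lemma one_lt_masterIntegral_iff (hf : ContinuousOn f (Icc 0 1))
    (hfpos : ∀ x ∈ Icc (0 : ℝ) 1, 0 < f x) (hs : s ≠ 0) (hv : 0 < v) :
    1 < masterIntegral f s v ↔ v < masterSolution f s := by
  by_cases h : ∃ u, 0 < u ∧ masterIntegral f s u = 1
  · obtain ⟨hu, hroot⟩ := h.choose_spec
    rw [masterSolution, dif_pos h]
    conv_lhs => rw [← hroot]
    exact (strictAntiOn_masterIntegral hf hfpos hs).lt_iff_gt hu.le hv.le
  · rw [masterSolution, dif_neg h]
    exact iff_of_false (lt_asymm (masterIntegral_lt_one_of_not_exists hf hfpos hs h hv))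
      (lt_asymm hv)

lemma tendsto_masterSolution {l : Filter ℝ} {w : ℝ}
    (hf : ContinuousOn f (Icc 0 1)) (hfpos : ∀ x ∈ Icc (0 : ℝ) 1, 0 < f x)
    (hl : ∀ᶠ s in l, s ≠ 0) (hw : 0 ≤ w)
    (hlt : ∀ v, 0 < v → v < w → ∀ᶠ s in l, 1 < masterIntegral f s v)
    (hgt : ∀ v, w < v → ∀ᶠ s in l, masterIntegral f s v < 1) :
    Tendsto (masterSolution f) l (𝓝 w) := by
  refine tendsto_order.2 ⟨fun b hb => ?_, fun b hb => ?_⟩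
  · rcases lt_or_ge b 0 with hb0 | hb0
    · exact Eventually.of_forall fun s => hb0.trans_le (masterSolution_nonneg f s)
    obtain ⟨v, hbv, hvw⟩ := exists_between hb
    filter_upwards [hl, hlt v (hb0.trans_lt hbv) hvw] with s hs hv
    exact hbv.trans ((one_lt_masterIntegral_iff hf hfpos hs (hb0.trans_lt hbv)).1 hv)
  · filter_upwards [hl, hgt b hb] with s hs hv
    exact (masterIntegral_lt_one_iff hf hfpos hs (hw.trans_lt hb)).1 hv

lemma continuousAt_masterSolution (hf : ContinuousOn f (Icc 0 1))
    (hfpos : ∀ x ∈ Icc (0 : ℝ) 1, 0 < f x) (hs : s ≠ 0) :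
    ContinuousAt (masterSolution f) s :=
  tendsto_masterSolution hf hfpos (eventually_ne_nhds hs) (masterSolution_nonneg f s)
    (fun _ hv hvs => ((continuous_masterIntegral_left hf hfpos hv).tendsto s).eventually_const_lt
      ((one_lt_masterIntegral_iff hf hfpos hs hv).2 hvs))
    fun _ hsv =>
      have hv := (masterSolution_nonneg f s).trans_lt hsv
      ((continuous_masterIntegral_left hf hfpos hv).tendsto s).eventually_lt_const
        ((masterIntegral_lt_one_iff hf hfpos hs hv).2 hsv)

lemma tendsto_masterSolution_nhdsNE_zero (hf : ContinuousOn f (Icc 0 1))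
    (hfpos : ∀ x ∈ Icc (0 : ℝ) 1, 0 < f x) :
    Tendsto (masterSolution f) (𝓝[≠] 0) (𝓝 1) := by
  have hG (v : ℝ) (hv : 0 < v) : Tendsto (masterIntegral f · v) (𝓝[≠] 0) (𝓝 v⁻¹) := by
    rw [← masterIntegral_zero_left hfpos v]
    exact ((continuous_masterIntegral_left hf hfpos hv).tendsto 0).mono_left nhdsWithin_le_nhds
  exact tendsto_masterSolution hf hfpos self_mem_nhdsWithin zero_le_one
    (fun v hv hv1 => (hG v hv).eventually_const_lt ((one_lt_inv₀ hv).2 hv1))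
    (fun v hv1 => (hG v (one_pos.trans hv1)).eventually_lt_const (inv_lt_one_of_one_lt₀ hv1))

end MasterEquation

/-- the limiting scalar Master Equation for a sampled separable
variance profile: unique positive solution `u_∞(s)` for `0 < s < √ρ_∞`, continuity
of its extension by `0`, and `u_∞(s) → 1` as `s ↓ 0`. -/
theorem stmt_12 (d dt : ℝ → ℝ)
    (hd_cont : ContinuousOn d (Set.Icc 0 1)) (hdt_cont : ContinuousOn dt (Set.Icc 0 1))
    (hd_pos : ∀ x ∈ Set.Icc (0 : ℝ) 1, 0 < d x)
    (hdt_pos : ∀ x ∈ Set.Icc (0 : ℝ) 1, 0 < dt x)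
    (ρ : ℝ) (hρ : ρ = ∫ x in (0 : ℝ)..1, d x * dt x) :
    (∀ s : ℝ, 0 < s → s < Real.sqrt ρ →
      ∃! u : ℝ, 0 < u ∧
        ∫ x in (0 : ℝ)..1, d x * dt x / (s ^ 2 + d x * dt x * u) = 1) ∧
    (∃ u : ℝ → ℝ,
      (∀ s : ℝ, 0 < s → s < Real.sqrt ρ →
        0 < u s ∧
        ∫ x in (0 : ℝ)..1, d x * dt x / (s ^ 2 + d x * dt x * u s) = 1) ∧
      (∀ s : ℝ, Real.sqrt ρ ≤ s → u s = 0) ∧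
      ContinuousOn u (Set.Ioi 0) ∧
      Tendsto u (nhdsWithin 0 (Set.Ioi (0 : ℝ))) (nhds 1)) := by
  have hf : ContinuousOn (fun x => d x * dt x) (Icc 0 1) := hd_cont.mul hdt_cont
  have hfpos : ∀ x ∈ Icc (0 : ℝ) 1, 0 < d x * dt x := fun x hx =>
    mul_pos (hd_pos x hx) (hdt_pos x hx)
  have hρ_pos : 0 < ρ := hρ ▸ intervalIntegral_pos_of_pos_on (hf.intervalIntegrable_of_Icc
    zero_le_one) (fun x hx => hfpos x (Ioo_subset_Icc_self hx)) one_pos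
  have hsq {s : ℝ} (hs : 0 < s) (hsρ : s < √ρ) : s ^ 2 < ∫ x in (0 : ℝ)..1, d x * dt x :=
    hρ ▸ (Real.lt_sqrt hs.le).1 hsρ
  refine ⟨fun s hs hsρ => existsUnique_masterIntegral_eq_one hf hfpos hs.ne' (hsq hs hsρ),
    masterSolution fun x => d x * dt x,
    fun s hs hsρ => masterSolution_spec hf hfpos hs.ne' (hsq hs hsρ), fun s hsρ => ?_,
    fun s hs => (continuousAt_masterSolution hf hfpos hs.ne').continuousWithinAt,
    (tendsto_masterSolution_nhdsNE_zero hf hfpos).mono_left (nhdsGT_le_nhdsNE 0)⟩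
  have hs : 0 < s := (Real.sqrt_pos.2 hρ_pos).trans_le hsρ
  exact masterSolution_eq_zero hf hfpos hs.ne' (hρ ▸ (Real.sqrt_le_left hs.le).1 hsρ)
end

section
/- Let n ≥ 1 and let A, B be n×n complex matrices such that ρ(A⊙Ā) < 1 and ρ(B⊙B̄) < 1. Then: (1) the matrix I − A⊙B is invertible; (2) for all vectors u, v, w, r ∈ ℂ^n, |(u⊙v)ᵀ·(I − A⊙B)^{-1}·(w⊙r)| ≤ √((u⊙ū)ᵀ·(I − A⊙Ā)^{-1}·(w⊙w̄)) · √((v⊙v̄)ᵀ·(I − B⊙B̄)^{-1}·(r⊙r̄)), where the two quantities under the square roots are nonnegative real numbers; (3) the maximum absolute row-sum norms satisfy ‖(I − A⊙B)^{-1}‖_∞ ≤ √(‖(I − A⊙Ā)^{-1}‖_∞) · √(‖(I − B⊙B̄)^{-1}‖_∞). -/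
/-!
Write `P = A ⊙ Ā` and `Q = B ⊙ B̄`; these are real matrices with nonnegative entries. By the Gelfand
formula, `ρ(P) < 1` makes the Neumann series `∑ Pᵏ` converge, with sum `(I - P)⁻¹`, and likewise
for `Q`. Cauchy–Schwarz over the summation index of a matrix product gives, by induction on `k`,
`|((A ⊙ B)ᵏ)ᵢⱼ| ≤ √((Pᵏ)ᵢⱼ) √((Qᵏ)ᵢⱼ)`. Hence `∑ (A ⊙ B)ᵏ` converges too, and Cauchy–Schwarz over
`k` gives `|((I - A ⊙ B)⁻¹)ᵢⱼ| ≤ √(((I - P)⁻¹)ᵢⱼ) √(((I - Q)⁻¹)ᵢⱼ)`. One more Cauchy–Schwarz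
turns this entrywise bound into both the bilinear-form estimate and the row-sum estimate.
-/

open Matrix BigOperators

/-- The spectral radius of a complex square matrix: the maximum modulus of its
eigenvalues (the roots of its characteristic polynomial). -/
noncomputable def specRadC {n : ℕ} (M : Matrix (Fin n) (Fin n) ℂ) : ℝ :=
  sSup {x : ℝ | ∃ μ : ℂ, M.charpoly.IsRoot μ ∧ x = ‖μ‖}

theorem summable_norm_pow_of_spectralRadius_lt_one {𝔸 : Type*} [NormedRing 𝔸]
    [NormedAlgebra ℂ 𝔸] [CompleteSpace 𝔸] {a : 𝔸} (ha : spectralRadius ℂ a < 1) :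
    Summable fun k => ‖a ^ k‖ := by
  obtain ⟨r, hρr, hr1⟩ := ENNReal.lt_iff_exists_nnreal_btwn.mp ha
  refine (summable_geometric_of_lt_one r.coe_nonneg (mod_cast hr1)).of_norm_bounded_eventually_nat
    ?_
  have hroot :=
    (spectrum.pow_nnnorm_pow_one_div_tendsto_nhds_spectralRadius a).eventually_lt_const hρr
  filter_upwards [hroot, Filter.eventually_gt_atTop 0] with k hk hk0
  rw [one_div, ENNReal.rpow_inv_lt_iff (by positivity), ENNReal.rpow_natCast] at hk
  rw [norm_norm]
  exact_mod_cast hk.le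

theorem spectralRadius_le_specRadC {n : ℕ} (C : Matrix (Fin n) (Fin n) ℂ) :
    spectralRadius ℂ C ≤ ENNReal.ofReal (specRadC C) := by
  have hfin : {x : ℝ | ∃ μ : ℂ, C.charpoly.IsRoot μ ∧ x = ‖μ‖}.Finite := by
    simpa [Set.image, eq_comm] using
      ((Polynomial.finite_setOfPred_isRoot C.charpoly_monic.ne_zero).image (‖·‖))
  refine iSup₂_le fun μ hμ => ?_
  rw [← enorm_eq_nnnorm, ← ofReal_norm]
  exact ENNReal.ofReal_le_ofReal <|
    le_csSup hfin.bddAbove ⟨μ, Matrix.mem_spectrum_iff_isRoot_charpoly.mp hμ, rfl⟩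

section LinftyOpNorm

-- This norm induces the product topology, so the summability below is the usual entrywise one.
attribute [local instance] Matrix.linftyOpNormedRing Matrix.linftyOpNormedAlgebra

theorem summable_pow_of_specRadC_lt_one {n : ℕ} {C : Matrix (Fin n) (Fin n) ℂ}
    (hC : specRadC C < 1) : Summable (C ^ ·) := by
  have hρ : spectralRadius ℂ C < 1 :=
    (spectralRadius_le_specRadC C).trans_lt (ENNReal.ofReal_lt_one.mpr hC)
  exact (summable_norm_pow_of_spectralRadius_lt_one hρ).of_norm

end LinftyOpNorm

section CauchySchwarz

variable {κ : Type*} {f g : κ → ℝ}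

theorem Real.sum_sqrt_mul_sqrt_le_sqrt_tsum_mul_sqrt_tsum (hf : 0 ≤ f) (hg : 0 ≤ g)
    (hfs : Summable f) (hgs : Summable g) (s : Finset κ) :
    ∑ k ∈ s, √(f k) * √(g k) ≤ √(∑' k, f k) * √(∑' k, g k) :=
  (Real.sum_sqrt_mul_sqrt_le s hf hg).trans <| by
    gcongr
    · exact hfs.sum_le_tsum s fun k _ => hf k
    · exact hgs.sum_le_tsum s fun k _ => hg k

theorem Real.summable_sqrt_mul_sqrt (hf : 0 ≤ f) (hg : 0 ≤ g) (hfs : Summable f)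
    (hgs : Summable g) : Summable fun k => √(f k) * √(g k) :=
  summable_of_sum_le (fun k => by positivity)
    (Real.sum_sqrt_mul_sqrt_le_sqrt_tsum_mul_sqrt_tsum hf hg hfs hgs)

theorem norm_tsum_le_sqrt_tsum_mul_sqrt_tsum {E : Type*} [SeminormedAddCommGroup E]
    {x : κ → E} (hf : 0 ≤ f) (hg : 0 ≤ g) (hfs : Summable f) (hgs : Summable g)
    (hx : ∀ k, ‖x k‖ ≤ √(f k) * √(g k)) :
    ‖∑' k, x k‖ ≤ √(∑' k, f k) * √(∑' k, g k) :=
  (tsum_of_norm_bounded (Real.summable_sqrt_mul_sqrt hf hg hfs hgs).hasSum hx).trans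
    (Real.tsum_le_of_sum_le (fun k => by positivity)
      (Real.sum_sqrt_mul_sqrt_le_sqrt_tsum_mul_sqrt_tsum hf hg hfs hgs))

end CauchySchwarz

namespace Matrix

open Complex

variable {ι : Type*} [Fintype ι]

theorem summable_iff_forall_apply {X R m n : Type*} [AddCommMonoid R] [TopologicalSpace R]
    {f : X → Matrix m n R} : Summable f ↔ ∀ i j, Summable fun x => f x i j :=
  Pi.summable.trans <| forall_congr' fun _ => Pi.summable

section Neumann

variable [DecidableEq ι] {R : Type*} [CommRing R] [TopologicalSpace R] [IsTopologicalRing R]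
  [T2Space R] {M : Matrix ι ι R}

theorem isUnit_one_sub_of_summable_pow (hM : Summable (M ^ ·)) : IsUnit (1 - M) :=
  (isUnit_iff_isUnit_det _).mpr (isUnit_det_of_right_inverse hM.one_sub_mul_tsum_pow)

theorem inv_one_sub_apply_eq_tsum (hM : Summable (M ^ ·)) (i j : ι) :
    (1 - M)⁻¹ i j = ∑' k, (M ^ k) i j := by
  rw [inv_eq_right_inv hM.one_sub_mul_tsum_pow]
  exact (congrFun (tsum_apply hM) j).trans (tsum_apply (Pi.summable.mp hM i))

end Neumann

theorem inv_one_sub_apply_nonneg [DecidableEq ι] {P : Matrix ι ι ℝ} (hPs : Summable (P ^ ·))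
    (hP : ∀ i j, 0 ≤ P i j) (i j : ι) : 0 ≤ (1 - P)⁻¹ i j := by
  rw [inv_one_sub_apply_eq_tsum hPs]
  exact tsum_nonneg fun k => pow_apply_nonneg hP k i j

theorem mulVec_nonneg_s16 {S : Matrix ι ι ℝ} {v : ι → ℝ} (hS : ∀ i j, 0 ≤ S i j) (hv : 0 ≤ v) :
    0 ≤ S *ᵥ v :=
  fun i => dotProduct_nonneg_of_nonneg (hS i) hv

theorem norm_mul_apply_le_sqrt_mul_sqrt {R : Type*} [NonUnitalSeminormedRing R] {M N : Matrix ι ι R}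
    {P P' Q Q' : Matrix ι ι ℝ} (hP : ∀ i j, 0 ≤ P i j) (hP' : ∀ i j, 0 ≤ P' i j)
    (hQ : ∀ i j, 0 ≤ Q i j) (hQ' : ∀ i j, 0 ≤ Q' i j)
    (hM : ∀ i j, ‖M i j‖ ≤ √(P i j) * √(Q i j)) (hN : ∀ i j, ‖N i j‖ ≤ √(P' i j) * √(Q' i j))
    (i j : ι) : ‖(M * N) i j‖ ≤ √((P * P') i j) * √((Q * Q') i j) :=
  calc ‖(M * N) i j‖ ≤ ∑ l, ‖M i l‖ * ‖N l j‖ :=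
        (norm_sum_le _ _).trans (Finset.sum_le_sum fun l _ => norm_mul_le _ _)
    _ ≤ ∑ l, √(P i l * P' l j) * √(Q i l * Q' l j) := by
        refine Finset.sum_le_sum fun l _ => ?_
        rw [Real.sqrt_mul (hP i l), Real.sqrt_mul (hQ i l)]
        calc ‖M i l‖ * ‖N l j‖ ≤ (√(P i l) * √(Q i l)) * (√(P' l j) * √(Q' l j)) :=
              mul_le_mul (hM i l) (hN l j) (norm_nonneg _) (by positivity)
          _ = _ := by ring
    _ ≤ √((P * P') i j) * √((Q * Q') i j) :=
        Real.sum_sqrt_mul_sqrt_le _ (fun l => mul_nonneg (hP i l) (hP' l j))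
          (fun l => mul_nonneg (hQ i l) (hQ' l j))

theorem norm_pow_apply_le_sqrt_mul_sqrt [DecidableEq ι] {R : Type*} [SeminormedRing R]
    [NormOneClass R] {M : Matrix ι ι R} {P Q : Matrix ι ι ℝ} (hP : ∀ i j, 0 ≤ P i j)
    (hQ : ∀ i j, 0 ≤ Q i j) (hM : ∀ i j, ‖M i j‖ ≤ √(P i j) * √(Q i j)) (k : ℕ) (i j : ι) :
    ‖(M ^ k) i j‖ ≤ √((P ^ k) i j) * √((Q ^ k) i j) := by
  induction k generalizing i j with
  | zero => by_cases h : i = j <;> simp [h]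
  | succ k ih =>
    simp only [pow_succ]
    exact norm_mul_apply_le_sqrt_mul_sqrt (pow_apply_nonneg hP k) hP (pow_apply_nonneg hQ k) hQ
      ih hM i j

theorem norm_dotProduct_mul_le {x : ι → ℂ} {s t : ι → ℝ} (hs : 0 ≤ s) (ht : 0 ≤ t)
    (hx : ∀ i, ‖x i‖ ≤ √(s i) * √(t i)) (u v : ι → ℂ) :
    ‖(u * v) ⬝ᵥ x‖ ≤ √((normSq ∘ u) ⬝ᵥ s) * √((normSq ∘ v) ⬝ᵥ t) :=
  calc ‖(u * v) ⬝ᵥ x‖ ≤ ∑ i, ‖u i‖ * ‖v i‖ * ‖x i‖ := by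
        refine (norm_sum_le _ _).trans (le_of_eq ?_)
        simp only [Pi.mul_apply, norm_mul]
    _ ≤ ∑ i, √(normSq (u i) * s i) * √(normSq (v i) * t i) := by
        refine Finset.sum_le_sum fun i _ => ?_
        rw [Real.sqrt_mul (normSq_nonneg _), Real.sqrt_mul (normSq_nonneg _),
          ← Complex.norm_def, ← Complex.norm_def]
        calc ‖u i‖ * ‖v i‖ * ‖x i‖ ≤ ‖u i‖ * ‖v i‖ * (√(s i) * √(t i)) := by gcongr; exact hx i
          _ = _ := by ring
    _ ≤ _ := Real.sum_sqrt_mul_sqrt_le _ (fun i => mul_nonneg (normSq_nonneg _) (hs i))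
        (fun i => mul_nonneg (normSq_nonneg _) (ht i))

section EntrywiseBound

variable {G : Matrix ι ι ℂ} {S T : Matrix ι ι ℝ} (hS : ∀ i j, 0 ≤ S i j)
  (hT : ∀ i j, 0 ≤ T i j) (hG : ∀ i j, ‖G i j‖ ≤ √(S i j) * √(T i j))
include hS hT hG

theorem norm_dotProduct_mulVec_le (u v w r : ι → ℂ) :
    ‖(u * v) ⬝ᵥ G *ᵥ (w * r)‖ ≤
      √((normSq ∘ u) ⬝ᵥ S *ᵥ (normSq ∘ w)) * √((normSq ∘ v) ⬝ᵥ T *ᵥ (normSq ∘ r)) := by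
  have hnormSq : ∀ z : ι → ℂ, 0 ≤ normSq ∘ z := fun z i => normSq_nonneg (z i)
  refine norm_dotProduct_mul_le (mulVec_nonneg_s16 hS (hnormSq w)) (mulVec_nonneg_s16 hT (hnormSq r))
    (fun i => ?_) u v
  simp only [mulVec, dotProduct_comm (G i), dotProduct_comm (S i), dotProduct_comm (T i)]
  exact norm_dotProduct_mul_le (hS i) (hT i) (hG i) w r

theorem sup'_sum_norm_le_sqrt_mul_sqrt (hι : (Finset.univ : Finset ι).Nonempty) :
    Finset.univ.sup' hι (fun i => ∑ j, ‖G i j‖) ≤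
      √(Finset.univ.sup' hι fun i => ∑ j, S i j) * √(Finset.univ.sup' hι fun i => ∑ j, T i j) := by
  refine Finset.sup'_le _ _ fun i _ => ?_
  calc ∑ j, ‖G i j‖ ≤ √(∑ j, S i j) * √(∑ j, T i j) :=
        (Finset.sum_le_sum fun j _ => hG i j).trans (Real.sum_sqrt_mul_sqrt_le _ (hS i) (hT i))
    _ ≤ _ := by gcongr <;> exact Finset.le_sup' (fun i => ∑ j, _) (Finset.mem_univ i)

end EntrywiseBound

theorem mul_star_dotProduct_map_ofReal_mulVec (S : Matrix ι ι ℝ) (u w : ι → ℂ) :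
    (u * star u) ⬝ᵥ S.map ofReal *ᵥ (w * star w) =
      ((normSq ∘ u) ⬝ᵥ S *ᵥ (normSq ∘ w) : ℝ) := by
  have hnormSq : ∀ z : ι → ℂ, z * star z = ofRealHom ∘ normSq ∘ z :=
    fun z => funext fun i => mul_conj (z i)
  rw [hnormSq, hnormSq, ← ofRealHom_eq_coe, RingHom.map_dotProduct]
  congr 1
  funext i
  exact (RingHom.map_mulVec ofRealHom S _ i).symm

section Hadamard

variable [DecidableEq ι] {A B : Matrix ι ι ℂ}

theorem pow_hadamard_map_conj_apply (A : Matrix ι ι ℂ) (k : ℕ) (i j : ι) :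
    ((A ⊙ A.map (starRingEnd ℂ)) ^ k) i j = ((A.map normSq ^ k) i j : ℂ) := by
  have hconj : A ⊙ A.map (starRingEnd ℂ) = (A.map normSq).map ofRealHom := by
    ext; simp [mul_conj]
  rw [hconj, ← Matrix.map_pow]
  rfl

theorem summable_pow_map_normSq (hA : Summable ((A ⊙ A.map (starRingEnd ℂ)) ^ ·)) :
    Summable (A.map normSq ^ ·) := by
  rw [summable_iff_forall_apply] at hA ⊢
  intro i j
  simpa only [pow_hadamard_map_conj_apply, summable_ofReal] using hA i j

theorem inv_one_sub_hadamard_map_conj (hA : Summable ((A ⊙ A.map (starRingEnd ℂ)) ^ ·)) :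
    (1 - A ⊙ A.map (starRingEnd ℂ))⁻¹ = (1 - A.map normSq)⁻¹.map ofReal := by
  ext i j
  simp only [map_apply, inv_one_sub_apply_eq_tsum hA,
    inv_one_sub_apply_eq_tsum (summable_pow_map_normSq hA), ofReal_tsum,
    pow_hadamard_map_conj_apply]

theorem norm_pow_hadamard_apply_le (A B : Matrix ι ι ℂ) (k : ℕ) (i j : ι) :
    ‖((A ⊙ B) ^ k) i j‖ ≤ √((A.map normSq ^ k) i j) * √((B.map normSq ^ k) i j) :=
  norm_pow_apply_le_sqrt_mul_sqrt (fun _ _ => normSq_nonneg _) (fun _ _ => normSq_nonneg _)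
    (fun i j => by simp [Complex.norm_def]) k i j

variable (hA : Summable (A.map normSq ^ ·)) (hB : Summable (B.map normSq ^ ·))
include hA hB

theorem summable_pow_hadamard : Summable ((A ⊙ B) ^ ·) := by
  rw [summable_iff_forall_apply] at hA hB ⊢
  exact fun i j => (Real.summable_sqrt_mul_sqrt
    (fun k => pow_apply_nonneg (fun _ _ => normSq_nonneg _) k i j)
    (fun k => pow_apply_nonneg (fun _ _ => normSq_nonneg _) k i j) (hA i j)
    (hB i j)).of_norm_bounded (fun k => norm_pow_hadamard_apply_le A B k i j)

theorem norm_inv_one_sub_hadamard_apply_le (i j : ι) :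
    ‖(1 - A ⊙ B)⁻¹ i j‖ ≤ √((1 - A.map normSq)⁻¹ i j) * √((1 - B.map normSq)⁻¹ i j) := by
  rw [inv_one_sub_apply_eq_tsum (summable_pow_hadamard hA hB), inv_one_sub_apply_eq_tsum hA,
    inv_one_sub_apply_eq_tsum hB]
  rw [summable_iff_forall_apply] at hA hB
  exact norm_tsum_le_sqrt_tsum_mul_sqrt_tsum
    (fun k => pow_apply_nonneg (fun _ _ => normSq_nonneg _) k i j)
    (fun k => pow_apply_nonneg (fun _ _ => normSq_nonneg _) k i j) (hA i j) (hB i j)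
    (fun k => norm_pow_hadamard_apply_le A B k i j)

end Hadamard

end Matrix

/-- Hadamard product lemma. If `ρ(A⊙Ā) < 1` and `ρ(B⊙B̄) < 1` then
`I − A⊙B` is invertible, a Cauchy–Schwarz-type inequality holds for quadratic forms
in `(I − A⊙B)⁻¹`, and the max-row norms satisfy the corresponding estimate. -/
theorem stmt_16 (n : ℕ) (hn : 0 < n) (A B : Matrix (Fin n) (Fin n) ℂ)
    (hA : specRadC (Matrix.hadamard A (A.map (starRingEnd ℂ))) < 1)
    (hB : specRadC (Matrix.hadamard B (B.map (starRingEnd ℂ))) < 1) :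
    IsUnit (1 - Matrix.hadamard A B) ∧
    (∀ u v w r : Fin n → ℂ,
      ∃ a b : ℝ, 0 ≤ a ∧ 0 ≤ b ∧
        dotProduct (u * star u)
          ((1 - Matrix.hadamard A (A.map (starRingEnd ℂ)))⁻¹.mulVec (w * star w))
            = (a : ℂ) ∧
        dotProduct (v * star v)
          ((1 - Matrix.hadamard B (B.map (starRingEnd ℂ)))⁻¹.mulVec (r * star r))
            = (b : ℂ) ∧
        ‖dotProduct (u * v) ((1 - Matrix.hadamard A B)⁻¹.mulVec (w * r))‖
          ≤ Real.sqrt a * Real.sqrt b) ∧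
    (Finset.univ.sup' (Finset.univ_nonempty_iff.mpr ⟨⟨0, hn⟩⟩)
        (fun i => ∑ j, ‖(1 - Matrix.hadamard A B)⁻¹ i j‖) ≤
      Real.sqrt (Finset.univ.sup' (Finset.univ_nonempty_iff.mpr ⟨⟨0, hn⟩⟩)
          (fun i => ∑ j,
            ‖(1 - Matrix.hadamard A (A.map (starRingEnd ℂ)))⁻¹ i j‖)) *
      Real.sqrt (Finset.univ.sup' (Finset.univ_nonempty_iff.mpr ⟨⟨0, hn⟩⟩)
          (fun i => ∑ j,
            ‖(1 - Matrix.hadamard B (B.map (starRingEnd ℂ)))⁻¹ i j‖))) := by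
  have hA' := summable_pow_of_specRadC_lt_one hA
  have hB' := summable_pow_of_specRadC_lt_one hB
  have hP := summable_pow_map_normSq hA'
  have hQ := summable_pow_map_normSq hB'
  have hP0 := inv_one_sub_apply_nonneg hP fun i j => Complex.normSq_nonneg (A i j)
  have hQ0 := inv_one_sub_apply_nonneg hQ fun i j => Complex.normSq_nonneg (B i j)
  have hG := norm_inv_one_sub_hadamard_apply_le hP hQ
  have hnormSq : ∀ z : Fin n → ℂ, 0 ≤ Complex.normSq ∘ z := fun z i => Complex.normSq_nonneg (z i)
  rw [inv_one_sub_hadamard_map_conj hA', inv_one_sub_hadamard_map_conj hB']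
  refine ⟨isUnit_one_sub_of_summable_pow (summable_pow_hadamard hP hQ), fun u v w r =>
    ⟨_, _, dotProduct_nonneg_of_nonneg (hnormSq u) (mulVec_nonneg_s16 hP0 (hnormSq w)),
      dotProduct_nonneg_of_nonneg (hnormSq v) (mulVec_nonneg_s16 hQ0 (hnormSq r)),
      mul_star_dotProduct_map_ofReal_mulVec _ u w, mul_star_dotProduct_map_ofReal_mulVec _ v r,
      norm_dotProduct_mulVec_le hP0 hQ0 hG u v w r⟩, ?_⟩
  simp only [map_apply, Complex.norm_real, Real.norm_eq_abs, abs_of_nonneg, hP0, hQ0]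
  exact sup'_sum_norm_le_sqrt_mul_sqrt hP0 hQ0 hG _
end
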